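/- arXiv:math/0407214 — 9 statements merged into one kernel-verified Lean document; each statement's English description precedes it below -/
import Mathlib

section
/- Let X be a Banach space such that there exist two norming closed subspaces Y, Z of X* with X* = Y ⊕₁ Z. Then for every x₀ ∈ S_X, every f₀ ∈ S_{X*}, and every ε > 0, there exists g ∈ S_{X*} with Re g(x₀) > 1 − ε and ‖f₀ + g‖ > 2 − ε. -/
set_option maxHeartbeats 4000000


open Filter Metric

/-- A subspace `Z` of the dual of `X` is norming if
`‖x‖ = sup {|f x| : f ∈ Z, ‖f‖ ≤ 1}` for every `x`. -/
def IsNorming {X : Type*} [NormedAddCommGroup X] [NormedSpace ℝ X]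
    (Z : Submodule ℝ (X →L[ℝ] ℝ)) : Prop :=
  ∀ x : X, ‖x‖ = sSup {r : ℝ | ∃ f ∈ Z, ‖f‖ ≤ 1 ∧ r = |f x|}

/-- From a norming subspace, extract a functional in the unit ball whose value at `x`
exceeds any threshold below `‖x‖`. -/
lemma IsNorming.exists_gt {X : Type*} [NormedAddCommGroup X] [NormedSpace ℝ X]
    {Z : Submodule ℝ (X →L[ℝ] ℝ)} (hZ : IsNorming Z) (x : X) {c : ℝ} (hc : c < ‖x‖) :
    ∃ f : X →L[ℝ] ℝ, f ∈ Z ∧ ‖f‖ ≤ 1 ∧ c < f x := by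
  have hne : {r : ℝ | ∃ f ∈ Z, ‖f‖ ≤ 1 ∧ r = |f x|}.Nonempty :=
    ⟨0, 0, Z.zero_mem, by simp⟩
  have hlt : c < sSup {r : ℝ | ∃ f ∈ Z, ‖f‖ ≤ 1 ∧ r = |f x|} := by
    rw [← hZ x]; exact hc
  obtain ⟨r, ⟨f, hfZ, hf1, rfl⟩, hr⟩ := exists_lt_of_lt_csSup hne hlt
  rcases abs_cases (f x) with ⟨h, _⟩ | ⟨h, _⟩
  · exact ⟨f, hfZ, hf1, by rw [h] at hr; exact hr⟩
  · refine ⟨-f, Z.neg_mem hfZ, by simpa using hf1, ?_⟩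
    have : (-f) x = -(f x) := ContinuousLinearMap.neg_apply _ _
    rw [this, ← h]; exact hr

/-- A functional almost attains its norm at a point of the unit ball (real scalars,
with the correct sign). -/
lemma exists_unitBall_apply_gt {X : Type*} [NormedAddCommGroup X] [NormedSpace ℝ X]
    (f : X →L[ℝ] ℝ) {c : ℝ} (hc : c < ‖f‖) :
    ∃ u : X, ‖u‖ ≤ 1 ∧ c < f u := by
  obtain ⟨u, hu1, hu⟩ := f.exists_lt_apply_of_lt_opNorm hc
  rcases abs_cases (f u) with ⟨h, _⟩ | ⟨h, _⟩
  · exact ⟨u, hu1.le, by rwa [← h, ← Real.norm_eq_abs]⟩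
  · refine ⟨-u, by simpa using hu1.le, ?_⟩
    have : f (-u) = -(f u) := by simp
    rw [this, ← h, ← Real.norm_eq_abs]; exact hu

theorem stmt1 {X : Type*} [NormedAddCommGroup X] [NormedSpace ℝ X] [CompleteSpace X]
    (Y Z : Submodule ℝ (X →L[ℝ] ℝ))
    (hYc : IsClosed (Y : Set (X →L[ℝ] ℝ))) (hZc : IsClosed (Z : Set (X →L[ℝ] ℝ)))
    (hYn : IsNorming Y) (hZn : IsNorming Z)
    (hdec : ∀ f : X →L[ℝ] ℝ, ∃! p : Y × Z, f = (p.1 : X →L[ℝ] ℝ) + (p.2 : X →L[ℝ] ℝ))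
    (hnorm : ∀ (y : Y) (z : Z), ‖(y : X →L[ℝ] ℝ) + (z : X →L[ℝ] ℝ)‖
      = ‖(y : X →L[ℝ] ℝ)‖ + ‖(z : X →L[ℝ] ℝ)‖)
    (x₀ : X) (hx₀ : ‖x₀‖ = 1) (f₀ : X →L[ℝ] ℝ) (hf₀ : ‖f₀‖ = 1)
    (ε : ℝ) (hε : 0 < ε) :
    ∃ g : X →L[ℝ] ℝ, ‖g‖ = 1 ∧ g x₀ > 1 - ε ∧ ‖f₀ + g‖ > 2 - ε := by
  -- the small parameter
  set δ : ℝ := min ε 1 / 7 with hδdef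
  have hδpos : 0 < δ := by positivity
  have hδ1 : δ ≤ 1 / 7 := by
    have : min ε 1 ≤ 1 := min_le_right _ _
    rw [hδdef]; linarith
  have hδε : 5 * δ < ε := by
    rcases le_total ε 1 with h | h
    · have : min ε 1 = ε := min_eq_left h
      rw [hδdef, this]; linarith
    · have : min ε 1 = 1 := min_eq_right h
      rw [hδdef, this]; linarith
  -- decompose f₀
  obtain ⟨⟨y₀, z₀⟩, hp, -⟩ := hdec f₀
  simp only at hp
  set a : ℝ := ‖(y₀ : X →L[ℝ] ℝ)‖ with ha
  set b : ℝ := ‖(z₀ : X →L[ℝ] ℝ)‖ with hb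
  have hab : a + b = 1 := by rw [ha, hb, ← hnorm y₀ z₀, ← hp, hf₀]
  -- pick z ∈ Z almost norming x₀
  obtain ⟨z, hzZ, hz1, hzx₀⟩ := hZn.exists_gt x₀ (c := 1 - δ) (by rw [hx₀]; linarith)
  have hzx₀' : z x₀ ≤ ‖z‖ := by
    calc z x₀ ≤ |z x₀| := le_abs_self _
    _ ≤ ‖z‖ * ‖x₀‖ := by rw [← Real.norm_eq_abs]; exact z.le_opNorm x₀
    _ = ‖z‖ := by rw [hx₀, mul_one]
  have hznorm : 1 - δ < ‖z‖ := lt_of_lt_of_le hzx₀ hzx₀'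
  -- pick u almost norming y₀ + z
  have hyz : ‖(y₀ : X →L[ℝ] ℝ) + z‖ = a + ‖z‖ := hnorm y₀ ⟨z, hzZ⟩
  obtain ⟨u, hu1, hu⟩ := exists_unitBall_apply_gt ((y₀ : X →L[ℝ] ℝ) + z)
    (c := a + ‖z‖ - δ) (by rw [hyz]; linarith)
  have huapp : a + ‖z‖ - δ < (y₀ : X →L[ℝ] ℝ) u + z u := by
    have : ((y₀ : X →L[ℝ] ℝ) + z) u = (y₀ : X →L[ℝ] ℝ) u + z u := ContinuousLinearMap.add_apply _ _ _
    rwa [this] at hu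
  have hy₀u' : (y₀ : X →L[ℝ] ℝ) u ≤ a := by
    calc (y₀ : X →L[ℝ] ℝ) u ≤ |(y₀ : X →L[ℝ] ℝ) u| := le_abs_self _
    _ ≤ ‖(y₀ : X →L[ℝ] ℝ)‖ * ‖u‖ := by
        rw [← Real.norm_eq_abs]; exact (y₀ : X →L[ℝ] ℝ).le_opNorm u
    _ ≤ a := by rw [← ha]; nlinarith [norm_nonneg (y₀ : X →L[ℝ] ℝ)]
  have hzu' : z u ≤ ‖z‖ := by
    calc z u ≤ |z u| := le_abs_self _
    _ ≤ ‖z‖ * ‖u‖ := by rw [← Real.norm_eq_abs]; exact z.le_opNorm u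
    _ ≤ ‖z‖ := by nlinarith [norm_nonneg z]
  have hy₀u : a - δ < (y₀ : X →L[ℝ] ℝ) u := by linarith
  have hzu : ‖z‖ - δ < z u := by linarith
  -- x₀ + u is almost of norm 2
  have hx₀u : 2 - 3 * δ < ‖x₀ + u‖ := by
    have h1 : z (x₀ + u) ≤ ‖x₀ + u‖ := by
      calc z (x₀ + u) ≤ |z (x₀ + u)| := le_abs_self _
      _ ≤ ‖z‖ * ‖x₀ + u‖ := by rw [← Real.norm_eq_abs]; exact z.le_opNorm _
      _ ≤ ‖x₀ + u‖ := by nlinarith [norm_nonneg (x₀ + u)]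
    have h2 : z (x₀ + u) = z x₀ + z u := z.map_add x₀ u
    linarith
  -- pick y ∈ Y almost norming x₀ + u
  obtain ⟨y, hyY, hy1, hyapp⟩ := hYn.exists_gt (x₀ + u) (c := 2 - 4 * δ) (by linarith)
  have hyx₀u : y (x₀ + u) = y x₀ + y u := y.map_add x₀ u
  have hyx₀' : y x₀ ≤ 1 := by
    calc y x₀ ≤ |y x₀| := le_abs_self _
    _ ≤ ‖y‖ * ‖x₀‖ := by rw [← Real.norm_eq_abs]; exact y.le_opNorm _
    _ ≤ 1 := by rw [hx₀, mul_one]; exact hy1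
  have hyu' : y u ≤ 1 := by
    calc y u ≤ |y u| := le_abs_self _
    _ ≤ ‖y‖ * ‖u‖ := by rw [← Real.norm_eq_abs]; exact y.le_opNorm _
    _ ≤ 1 := by nlinarith [norm_nonneg y]
  have hyx₀ : 1 - 4 * δ < y x₀ := by linarith
  have hyu : 1 - 4 * δ < y u := by linarith
  have hynorm : 1 - 4 * δ < ‖y‖ := by
    calc 1 - 4 * δ < y x₀ := hyx₀
    _ ≤ ‖y‖ := by
        calc y x₀ ≤ |y x₀| := le_abs_self _
        _ ≤ ‖y‖ * ‖x₀‖ := by rw [← Real.norm_eq_abs]; exact y.le_opNorm _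
        _ = ‖y‖ := by rw [hx₀, mul_one]
  have hypos : 0 < ‖y‖ := by linarith
  have hyinv : 1 ≤ ‖y‖⁻¹ := by
    rw [le_inv_comm₀ one_pos hypos]; simpa using hy1
  -- the functional g
  refine ⟨‖y‖⁻¹ • y, ?_, ?_, ?_⟩
  · have hns := norm_smul (‖y‖⁻¹) y
    rw [hns, norm_inv, norm_norm, inv_mul_cancel₀ hypos.ne']
  · have h1 : (‖y‖⁻¹ • y) x₀ = ‖y‖⁻¹ * y x₀ := by
      rw [ContinuousLinearMap.smul_apply, smul_eq_mul]
    have h2 : y x₀ ≤ ‖y‖⁻¹ * y x₀ := by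
      nlinarith [hyx₀, hδ1]
    rw [h1]; linarith
  · -- g belongs to Y, so we can use the ℓ₁ decomposition
    have hgY : ‖y‖⁻¹ • y ∈ Y := Y.smul_mem _ hyY
    have hsum : f₀ + ‖y‖⁻¹ • y = ((y₀ : X →L[ℝ] ℝ) + ‖y‖⁻¹ • y) + (z₀ : X →L[ℝ] ℝ) := by
      rw [hp]; abel
    have hkey : ‖f₀ + ‖y‖⁻¹ • y‖
        = ‖(y₀ : X →L[ℝ] ℝ) + ‖y‖⁻¹ • y‖ + b := by
      rw [hsum, hb]
      exact hnorm ⟨(y₀ : X →L[ℝ] ℝ) + ‖y‖⁻¹ • y, Y.add_mem y₀.2 hgY⟩ z₀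
    have hgu : y u ≤ (‖y‖⁻¹ • y) u := by
      have h1 : (‖y‖⁻¹ • y) u = ‖y‖⁻¹ * y u := by
        rw [ContinuousLinearMap.smul_apply, smul_eq_mul]
      rw [h1]; nlinarith [hyu, hδ1]
    have hlow : a - δ + (1 - 4 * δ) < ‖(y₀ : X →L[ℝ] ℝ) + ‖y‖⁻¹ • y‖ := by
      have happ : ((y₀ : X →L[ℝ] ℝ) + ‖y‖⁻¹ • y) u
          = (y₀ : X →L[ℝ] ℝ) u + (‖y‖⁻¹ • y) u := ContinuousLinearMap.add_apply _ _ _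
      have hle : ((y₀ : X →L[ℝ] ℝ) + ‖y‖⁻¹ • y) u
          ≤ ‖(y₀ : X →L[ℝ] ℝ) + ‖y‖⁻¹ • y‖ := by
        calc ((y₀ : X →L[ℝ] ℝ) + ‖y‖⁻¹ • y) u
            ≤ |((y₀ : X →L[ℝ] ℝ) + ‖y‖⁻¹ • y) u| := le_abs_self _
        _ ≤ ‖(y₀ : X →L[ℝ] ℝ) + ‖y‖⁻¹ • y‖ * ‖u‖ := by
            rw [← Real.norm_eq_abs]; exact ContinuousLinearMap.le_opNorm _ _
        _ ≤ ‖(y₀ : X →L[ℝ] ℝ) + ‖y‖⁻¹ • y‖ := by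
            nlinarith [norm_nonneg ((y₀ : X →L[ℝ] ℝ) + ‖y‖⁻¹ • y)]
      rw [happ] at hle
      linarith
    rw [hkey]
    linarith
end

section
/- Let X be a nonzero Banach space which is L-embedded, i.e., X** = X ⊕₁ Z for some closed subspace Z of X** (under the canonical embedding of X into X**, with the sum being an ℓ¹-sum of norms). If the closed unit ball of X has no extreme points, then X* has the Daugavet property. -/
/-!
Write `X** = J(X) ⊕₁ Z`. An extreme point `J x + z` of `B_{X**}` must have `x = 0`: otherwise
`w ↦ J (‖x‖ • w) + z` maps `B_X` injectively and affinely into `B_{X**}` and sends the unit vector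
`x / ‖x‖` to it, so `x / ‖x‖` would be extreme in `B_X`. By Krein–Milman in the weak-star topology,
`B_Z` is then weak-star dense in `B_{X**}`.

For `T = φ ⊗ y` on `X*` with `φ = J x + z` and `G ∈ B_Z`, the adjoint gives
`‖Id + T‖ ≥ ‖G + G(y) φ‖ = |G(y)| ‖x‖ + ‖G + G(y) z‖ ≥ |G(y)| ‖x‖ + G(g) + G(y) z(g)` for every
`g ∈ B_{X*}`. The right-hand side is weak-star continuous in `G`, so the bound persists at
`G = J u` for `u ∈ B_X`; the supremum over `g` then yields `‖Id + T‖ ≥ ‖u‖ + ‖φ‖ |y(u)|`, and the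
supremum over `u` yields `‖Id + T‖ ≥ 1 + ‖φ‖ ‖y‖`.
-/

open Filter Metric NormedSpace

/-- A Banach space `X` has the Daugavet property if every rank-one operator
satisfies `‖Id + T‖ = 1 + ‖T‖`. -/
def DaugavetProperty (X : Type*) [NormedAddCommGroup X] [NormedSpace ℝ X] : Prop :=
  ∀ T : X →L[ℝ] X, (∃ (f : X →L[ℝ] ℝ) (y : X), T = f.smulRight y) →
    ‖ContinuousLinearMap.id ℝ X + T‖ = 1 + ‖T‖

theorem mem_extremePoints_of_mapsTo_of_injective {E F : Type*} [AddCommGroup E] [Module ℝ E]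
    [AddCommGroup F] [Module ℝ F] {f : E →ᵃ[ℝ] F} (hf : Function.Injective f) {A : Set E}
    {B : Set F} (hAB : Set.MapsTo f A B) {w : E} (hw : w ∈ A)
    (hfw : f w ∈ B.extremePoints ℝ) : w ∈ A.extremePoints ℝ := by
  refine ⟨hw, fun w₁ hw₁ w₂ hw₂ hseg => hf (hfw.2 (hAB hw₁) (hAB hw₂) ?_)⟩
  rw [← image_openSegment]
  exact Set.mem_image_of_mem f hseg

theorem IsCompact.subset_closure_of_extremePoints_subset {E : Type*} [AddCommGroup E]
    [Module ℝ E] [TopologicalSpace E] [T2Space E] [IsTopologicalAddGroup E] [ContinuousSMul ℝ E]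
    [LocallyConvexSpace ℝ E] {K C : Set E} (hK : IsCompact K) (hKconv : Convex ℝ K)
    (hC : Convex ℝ C) (hext : K.extremePoints ℝ ⊆ C) : K ⊆ closure C := by
  conv_lhs => rw [← closure_convexHull_extremePoints hK hKconv]
  exact closure_mono (convexHull_min hext hC)


instance WeakDual.instLocallyConvexSpace {V : Type*} [NormedAddCommGroup V] [NormedSpace ℝ V] :
    LocallyConvexSpace ℝ (WeakDual ℝ V) :=
  WeakBilin.locallyConvexSpace

theorem WeakDual.closedBall_subset_closure_of_extremePoints_subset {V : Type*}
    [NormedAddCommGroup V] [NormedSpace ℝ V] {C : Set (StrongDual ℝ V)} (hC : Convex ℝ C)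
    (hext : (closedBall (0 : StrongDual ℝ V) 1).extremePoints ℝ ⊆ C) :
    toStrongDual ⁻¹' closedBall 0 1 ⊆ closure (toStrongDual ⁻¹' (closedBall 0 1 ∩ C)) := by
  have hKconv : Convex ℝ (toStrongDual ⁻¹' closedBall (0 : StrongDual ℝ V) 1) :=
    (convex_closedBall _ _).linear_preimage (toStrongDual (𝕜 := ℝ) (E := V)).toLinearMap
  refine (WeakDual.isCompact_closedBall 0 1).subset_closure_of_extremePoints_subset hKconv
    ((convex_closedBall _ _).inter hC |>.linear_preimage (toStrongDual (𝕜 := ℝ)).toLinearMap)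
    fun F hF => ?_
  have hF' : toStrongDual F ∈ (closedBall (0 : StrongDual ℝ V) 1).extremePoints ℝ := by
    rw [← Set.image_preimage_eq (closedBall (0 : StrongDual ℝ V) 1) toStrongDual.surjective,
      ← image_extremePoints]
    exact Set.mem_image_of_mem _ hF
  exact ⟨hF'.1, hext hF'⟩

theorem StrongDual.apply_le_norm {E : Type*} [NormedAddCommGroup E] [NormedSpace ℝ E]
    (f : StrongDual ℝ E) {g : E} (hg : ‖g‖ ≤ 1) : f g ≤ ‖f‖ :=
  (le_abs_self _).trans ((f.le_opNorm g).trans (mul_le_of_le_one_right (norm_nonneg f) hg))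

theorem StrongDual.norm_le_of_forall_apply_le {E : Type*} [NormedAddCommGroup E]
    [NormedSpace ℝ E] (f : StrongDual ℝ E) {C : ℝ} (h : ∀ g : E, ‖g‖ ≤ 1 → f g ≤ C) :
    ‖f‖ ≤ C := by
  refine f.opNorm_le_of_unit_norm (by simpa using h 0 (by simp)) fun g hg => ?_
  have hneg : f (-g) ≤ C := h (-g) (by rw [norm_neg, hg])
  rw [map_neg] at hneg
  exact abs_le.2 ⟨by linarith, h g hg.le⟩

theorem norm_add_apply_smul_le_norm_id_add_smulRight {E : Type*} [NormedAddCommGroup E]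
    [NormedSpace ℝ E] (φ G : StrongDual ℝ E) (y : E) (hG : ‖G‖ ≤ 1) :
    ‖G + G y • φ‖ ≤ ‖ContinuousLinearMap.id ℝ E + φ.smulRight y‖ := by
  have hcomp : G + G y • φ = G.comp (ContinuousLinearMap.id ℝ E + φ.smulRight y) := by
    ext h; simp [mul_comm]
  rw [hcomp]
  exact (G.opNorm_comp_le _).trans (mul_le_of_le_one_left (norm_nonneg _) hG)

theorem one_add_mul_norm_le_of_forall_norm_le_one {E : Type*} [NormedAddCommGroup E]
    [NormedSpace ℝ E] [Nontrivial E] (y : StrongDual ℝ E) {c S : ℝ} (hc : 0 ≤ c)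
    (h : ∀ u : E, ‖u‖ ≤ 1 → ‖u‖ + c * |y u| ≤ S) : 1 + c * ‖y‖ ≤ S := by
  obtain ⟨u₀, hu₀⟩ := (NormedSpace.sphere_nonempty (x := (0 : E)) (r := 1)).2 zero_le_one
  rw [mem_sphere_zero_iff_norm] at hu₀
  have hS : 0 ≤ S - 1 := by
    have := h u₀ hu₀.le
    rw [hu₀] at this
    nlinarith [abs_nonneg (y u₀)]
  have hcy : ‖c • y‖ ≤ S - 1 := (c • y).opNorm_le_of_unit_norm hS fun u hu => by
    have := h u hu.le
    rw [hu] at this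
    simpa [abs_mul, abs_of_nonneg hc] using (by linarith : c * |y u| ≤ S - 1)
  rw [norm_smul, Real.norm_of_nonneg hc] at hcy
  linarith

theorem extremePoints_closedBall_subset_of_norm_add_eq {X E : Type*} [NormedAddCommGroup X]
    [NormedSpace ℝ X] [NormedAddCommGroup E] [NormedSpace ℝ E] (J : X →L[ℝ] E)
    (Z : Submodule ℝ E) (hspan : ∀ F : E, ∃ (x : X) (z : Z), F = J x + z)
    (hnorm : ∀ (x : X) (z : Z), ‖J x + z‖ = ‖x‖ + ‖(z : E)‖)
    (hext : (closedBall (0 : X) 1).extremePoints ℝ = ∅) :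
    (closedBall (0 : E) 1).extremePoints ℝ ⊆ Z := by
  intro F hF
  obtain ⟨x, z, rfl⟩ := hspan F
  suffices hx : x = 0 by simp [hx]
  by_contra hx
  have hxpos : 0 < ‖x‖ := norm_pos_iff.2 hx
  have hF_le : ‖x‖ + ‖(z : E)‖ ≤ 1 := by simpa [hnorm] using hF.1
  let ψ : X →ᵃ[ℝ] E := (‖x‖ • J.toLinearMap).toAffineMap + AffineMap.const ℝ X (z : E)
  have hψ : ∀ w, ψ w = J (‖x‖ • w) + z := fun w => by simp [ψ]
  have hinj : Function.Injective ψ := fun a b hab => by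
    rw [hψ, hψ, add_left_inj] at hab
    have h := hnorm (‖x‖ • a - ‖x‖ • b) 0
    rw [map_sub, hab, sub_self] at h
    simpa [sub_eq_zero, hxpos.ne'] using h.symm
  have hmaps : Set.MapsTo ψ (closedBall 0 1) (closedBall 0 1) := fun w hw => by
    rw [mem_closedBall_zero_iff] at hw ⊢
    rw [hψ, hnorm, norm_smul, Real.norm_of_nonneg hxpos.le]
    nlinarith
  have hunit : ‖x‖⁻¹ • x ∈ closedBall (0 : X) 1 := by
    simp [norm_smul, inv_mul_cancel₀ hxpos.ne']
  have := mem_extremePoints_of_mapsTo_of_injective hinj hmaps hunit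
    (by rwa [hψ, smul_inv_smul₀ hxpos.ne'])
  simp [hext] at this

section LEmbedded

local notation:max E "**" => StrongDual ℝ (StrongDual ℝ E)

variable {X : Type*} [NormedAddCommGroup X] [NormedSpace ℝ X] {Z : Submodule ℝ (X**)}

theorem abs_mul_norm_add_le_norm_id_add_smulRight
    (hnorm : ∀ (x : X) (z : Z), ‖inclusionInDoubleDual ℝ X x + (z : X**)‖ = ‖x‖ + ‖(z : X**)‖)
    (x : X) (z : Z) (y : StrongDual ℝ X) {G : X**} (hGZ : G ∈ Z) (hG : ‖G‖ ≤ 1)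
    {g : StrongDual ℝ X} (hg : ‖g‖ ≤ 1) :
    |G y| * ‖x‖ + (G g + G y * (z : X**) g) ≤
      ‖ContinuousLinearMap.id ℝ (StrongDual ℝ X) +
        (inclusionInDoubleDual ℝ X x + (z : X**)).smulRight y‖ :=
  calc |G y| * ‖x‖ + (G g + G y * (z : X**) g)
      = ‖G y • x‖ + (G + G y • (z : X**)) g := by simp [norm_smul, mul_comm]
    _ ≤ ‖G y • x‖ + ‖G + G y • (z : X**)‖ := by grw [StrongDual.apply_le_norm _ hg]
    _ = ‖G + G y • (inclusionInDoubleDual ℝ X x + (z : X**))‖ := by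
        have h := hnorm (G y • x) (⟨G, hGZ⟩ + G y • z)
        rw [Submodule.coe_add, Submodule.coe_smul, Submodule.coe_mk, map_smul] at h
        rw [← h]
        congr 1
        module
    _ ≤ _ := norm_add_apply_smul_le_norm_id_add_smulRight _ _ _ hG

theorem norm_add_mul_abs_le_norm_id_add_smulRight
    (hnorm : ∀ (x : X) (z : Z), ‖inclusionInDoubleDual ℝ X x + (z : X**)‖ = ‖x‖ + ‖(z : X**)‖)
    (hdense : WeakDual.toStrongDual ⁻¹' closedBall (0 : X**) 1 ⊆
      closure (WeakDual.toStrongDual ⁻¹' (closedBall 0 1 ∩ Z)))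
    (x : X) (z : Z) (y : StrongDual ℝ X) {u : X} (hu : ‖u‖ ≤ 1) :
    ‖u‖ + (‖x‖ + ‖(z : X**)‖) * |y u| ≤
      ‖ContinuousLinearMap.id ℝ (StrongDual ℝ X) +
        (inclusionInDoubleDual ℝ X x + (z : X**)).smulRight y‖ := by
  set S := ‖ContinuousLinearMap.id ℝ (StrongDual ℝ X) +
    (inclusionInDoubleDual ℝ X x + (z : X**)).smulRight y‖
  have hJu : WeakDual.toStrongDual.symm (inclusionInDoubleDual ℝ X u) ∈
      WeakDual.toStrongDual ⁻¹' closedBall (0 : X**) 1 := by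
    rw [Set.mem_preimage, LinearEquiv.apply_symm_apply, mem_closedBall_zero_iff (E := X**)]
    exact (double_dual_bound ℝ X u).trans hu
  have hbound : ∀ g : StrongDual ℝ X, ‖g‖ ≤ 1 →
      (inclusionInDoubleDual ℝ X u + (y u • z : Z)) g ≤ S - |y u| * ‖x‖ := by
    intro g hg
    have hclosed : IsClosed {G : WeakDual ℝ (StrongDual ℝ X) |
        |G y| * ‖x‖ + (G g + G y * (z : X**) g) ≤ S} :=
      isClosed_le (((continuous_abs.comp (WeakDual.eval_continuous y)).mul continuous_const).add
        ((WeakDual.eval_continuous g).add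
          ((WeakDual.eval_continuous y).mul continuous_const))) continuous_const
    have h : |y u| * ‖x‖ + (g u + y u * (z : X**) g) ≤ S :=
      closure_minimal (fun G hG => abs_mul_norm_add_le_norm_id_add_smulRight hnorm x z y hG.2
        (mem_closedBall_zero_iff (E := X**) |>.1 hG.1) hg) hclosed (hdense hJu)
    simp only [add_apply, Submodule.coe_smul, smul_apply, smul_eq_mul, dual_def]
    linarith
  have h := StrongDual.norm_le_of_forall_apply_le _ hbound
  -- instance search does not find `NormSMulClass ℝ` on the bidual
  rw [hnorm, Submodule.coe_smul, (NormedSpace.toNormSMulClass (𝕜 := ℝ) (E := X**)).norm_smul,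
    Real.norm_eq_abs] at h
  linarith

end LEmbedded

theorem stmt2_general {X : Type*} [NormedAddCommGroup X] [NormedSpace ℝ X]
    [Nontrivial X]
    (Z : Submodule ℝ (StrongDual ℝ (StrongDual ℝ X)))
    (hdec : ∀ F : StrongDual ℝ (StrongDual ℝ X), ∃! p : X × Z,
      F = inclusionInDoubleDual ℝ X p.1 + (p.2 : StrongDual ℝ (StrongDual ℝ X)))
    (hnorm : ∀ (x : X) (z : Z),
      ‖inclusionInDoubleDual ℝ X x + (z : StrongDual ℝ (StrongDual ℝ X))‖ = ‖x‖ + ‖(z : StrongDual ℝ (StrongDual ℝ X))‖)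
    (hext : Set.extremePoints ℝ (closedBall (0 : X) 1) = ∅) :
    DaugavetProperty (StrongDual ℝ X) := by
  have hspan : ∀ F : StrongDual ℝ (StrongDual ℝ X), ∃ (x : X) (z : Z),
      F = inclusionInDoubleDual ℝ X x + z := fun F =>
    let ⟨p, hp, _⟩ := hdec F; ⟨p.1, p.2, hp⟩
  have hdense := WeakDual.closedBall_subset_closure_of_extremePoints_subset Z.convex
    (extremePoints_closedBall_subset_of_norm_add_eq (E := StrongDual ℝ (StrongDual ℝ X))
      (inclusionInDoubleDual ℝ X) Z hspan hnorm hext)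
  rintro _ ⟨φ, y, rfl⟩
  obtain ⟨x, z, rfl⟩ := hspan φ
  refine le_antisymm ((norm_add_le _ _).trans ?_) ?_
  · grw [ContinuousLinearMap.norm_id_le]
  rw [ContinuousLinearMap.norm_smulRight_apply, hnorm]
  exact one_add_mul_norm_le_of_forall_norm_le_one y (by positivity) fun u hu =>
    norm_add_mul_abs_le_norm_id_add_smulRight hnorm hdense x z y hu

theorem stmt2 {X : Type*} [NormedAddCommGroup X] [NormedSpace ℝ X] [CompleteSpace X]
    [Nontrivial X]
    (Z : Submodule ℝ (StrongDual ℝ (StrongDual ℝ X))) (hZc : IsClosed (Z : Set (StrongDual ℝ (StrongDual ℝ X))))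
    (hdec : ∀ F : StrongDual ℝ (StrongDual ℝ X), ∃! p : X × Z,
      F = inclusionInDoubleDual ℝ X p.1 + (p.2 : StrongDual ℝ (StrongDual ℝ X)))
    (hnorm : ∀ (x : X) (z : Z),
      ‖inclusionInDoubleDual ℝ X x + (z : StrongDual ℝ (StrongDual ℝ X))‖ = ‖x‖ + ‖(z : StrongDual ℝ (StrongDual ℝ X))‖)
    (hext : Set.extremePoints ℝ (closedBall (0 : X) 1) = ∅) :
    DaugavetProperty (StrongDual ℝ X) :=
  stmt2_general Z hdec hnorm hext
end

section
/- Let X be an L-embedded Banach space, X** = X ⊕₁ Z. If the unit ball B_X of X has no extreme points, then the unit ball of Z is weak*-dense in the unit ball of X**. -/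
open Metric NormedSpace

/-! Every extreme point of the unit ball of `X** = J X ⊕₁ Z` lies in `Z`: an extreme point
`J x + z` with both parts nonzero lies strictly between `J x` and `z` rescaled to the same norm,
and an extreme point of the form `J x` would make `x` extreme in `B_X`. By Banach–Alaoglu and
Krein–Milman, `B_{X**}` is the weak*-closed convex hull of its extreme points, hence lies in the
weak*-closure of the convex set `Z ∩ B_{X**}`. -/

theorem mem_extremePoints_of_map_mem_extremePoints {E F : Type*} [AddCommGroup E] [Module ℝ E]
    [AddCommGroup F] [Module ℝ F] {f : E →ₗ[ℝ] F} (hf : Function.Injective f) {A : Set E}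
    {B : Set F} (hAB : f '' A ⊆ B) {x : E} (hx : x ∈ A) (hfx : f x ∈ B.extremePoints ℝ) :
    x ∈ A.extremePoints ℝ := by
  refine ⟨hx, fun x₁ hx₁ x₂ hx₂ hseg ↦
    hf (hfx.2 (hAB ⟨x₁, hx₁, rfl⟩) (hAB ⟨x₂, hx₂, rfl⟩) ?_)⟩
  obtain ⟨a, b, ha, hb, hab, rfl⟩ := hseg
  exact ⟨a, b, ha, hb, hab, by simp⟩

theorem eq_smul_left_of_add_mem_extremePoints_closedBall {E : Type*} [NormedAddCommGroup E]
    [NormedSpace ℝ E] {a b : E} (hext : a + b ∈ (closedBall (0 : E) 1).extremePoints ℝ)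
    (hle : ‖a‖ + ‖b‖ ≤ 1) (ha : a ≠ 0) (hb : b ≠ 0) :
    a + b = ((‖a‖ + ‖b‖) / ‖a‖) • a := by
  set t := ‖a‖ + ‖b‖
  have ht : 0 < t := by positivity
  -- `a + b` lies strictly between `a` and `b` rescaled to norm `t ≤ 1`
  have hmem : ∀ c : E, c ≠ 0 → (t / ‖c‖) • c ∈ closedBall (0 : E) 1 := fun c hc ↦ by
    rw [mem_closedBall_zero_iff, norm_smul, Real.norm_of_nonneg (by positivity),
      div_mul_cancel₀ _ (norm_ne_zero_iff.2 hc)]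
    exact hle
  have hcancel : ∀ c : E, c ≠ 0 → ‖c‖ / t * (t / ‖c‖) = 1 := fun c hc ↦ by
    have := norm_ne_zero_iff.2 hc
    field_simp
  have hseg : a + b ∈ openSegment ℝ ((t / ‖a‖) • a) ((t / ‖b‖) • b) := by
    refine ⟨‖a‖ / t, ‖b‖ / t, by positivity, by positivity,
      by rw [← add_div, div_self ht.ne'], ?_⟩
    rw [smul_smul, smul_smul, hcancel a ha, hcancel b hb, one_smul, one_smul]
  exact (hext.2 (hmem a ha) (hmem b hb) hseg).symm

theorem mem_of_mem_extremePoints_closedBall_of_l1_decomposition {X E : Type*}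
    [NormedAddCommGroup X] [NormedSpace ℝ X] [NormedAddCommGroup E] [NormedSpace ℝ E]
    (J : X →L[ℝ] E) (Z : Submodule ℝ E)
    (hdec : ∀ F : E, ∃! p : X × Z, F = J p.1 + (p.2 : E))
    (hnorm : ∀ (x : X) (z : Z), ‖J x + (z : E)‖ = ‖x‖ + ‖(z : E)‖)
    (hext : (closedBall (0 : X) 1).extremePoints ℝ = ∅) {F : E}
    (hF : F ∈ (closedBall (0 : E) 1).extremePoints ℝ) : F ∈ Z := by
  have hJ : ∀ x, ‖J x‖ = ‖x‖ := fun x ↦ by simpa using hnorm x 0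
  have hJinj : Function.Injective J := fun x y hxy ↦ by
    rw [← sub_eq_zero, ← norm_eq_zero, ← hJ, map_sub, hxy, sub_self, norm_zero]
  obtain ⟨⟨x, z⟩, rfl, huniq⟩ := hdec F
  rcases eq_or_ne x 0 with rfl | hx
  · simp
  rcases eq_or_ne z 0 with rfl | hz
  · have hJB : J '' closedBall 0 1 ⊆ closedBall 0 1 := by
      rintro _ ⟨y, hy, rfl⟩
      simpa [hJ] using hy
    have hx1 : x ∈ closedBall (0 : X) 1 := by simpa [hJ] using extremePoints_subset hF
    simpa [hext] using mem_extremePoints_of_map_mem_extremePoints (f := J.toLinearMap)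
      hJinj hJB hx1 (by simpa using hF)
  -- otherwise `F` is a multiple of `J x`, giving a second decomposition `F = J (c • x) + 0`
  have hle : ‖J x‖ + ‖(z : E)‖ ≤ 1 := by
    rw [hJ, ← hnorm, ← mem_closedBall_zero_iff]
    exact extremePoints_subset hF
  have hFx := eq_smul_left_of_add_mem_extremePoints_closedBall hF hle
    (by rwa [← norm_ne_zero_iff, hJ, norm_ne_zero_iff]) (by simpa using hz)
  have := huniq (((‖J x‖ + ‖(z : E)‖) / ‖J x‖) • x, 0) (by simpa using hFx)
  exact absurd (congrArg Prod.snd this).symm hz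

theorem closedBall_subset_weakStar_closure_of_extremePoints_subset {V : Type*}
    [NormedAddCommGroup V] [NormedSpace ℝ V] {S : Set (StrongDual ℝ V)} (hS : Convex ℝ S)
    (hext : (closedBall (0 : StrongDual ℝ V) 1).extremePoints ℝ ⊆ S) :
    StrongDual.toWeakDual '' closedBall 0 1 ⊆ closure (StrongDual.toWeakDual '' S) := by
  have : LocallyConvexSpace ℝ (WeakDual ℝ V) := WeakBilin.locallyConvexSpace
  have hconv : ∀ {T : Set (StrongDual ℝ V)}, Convex ℝ T →
      Convex ℝ (StrongDual.toWeakDual '' T) :=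
    fun hT ↦ hT.linear_image (StrongDual.toWeakDual (𝕜 := ℝ) (E := V)).toLinearMap
  have hK : IsCompact (StrongDual.toWeakDual '' closedBall (0 : StrongDual ℝ V) 1) := by
    rw [LinearEquiv.image_eq_preimage_symm]
    exact WeakDual.isCompact_closedBall 0 1
  rw [← closure_convexHull_extremePoints hK (hconv (convex_closedBall 0 1)),
    ← image_extremePoints]
  exact closure_mono (convexHull_min (Set.image_mono hext) (hconv hS))

theorem WeakDual.exists_abs_sub_lt_of_mem_closure {V : Type*} [AddCommGroup V] [Module ℝ V]
    [TopologicalSpace V] {S : Set (WeakDual ℝ V)} {G : WeakDual ℝ V} (hG : G ∈ closure S)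
    (s : Finset V) {ε : ℝ} (hε : 0 < ε) : ∃ H ∈ S, ∀ f ∈ s, |H f - G f| < ε := by
  have hU : IsOpen (⋂ f ∈ s, {H : WeakDual ℝ V | |H f - G f| < ε}) :=
    isOpen_biInter_finset fun f _ ↦
      isOpen_lt ((WeakDual.eval_continuous f).sub continuous_const).abs continuous_const
  obtain ⟨H, hHU, hHS⟩ := mem_closure_iff.1 hG _ hU (by simpa using fun _ _ ↦ hε)
  exact ⟨H, hHS, by simpa using hHU⟩

theorem stmt3_general {X : Type*} [NormedAddCommGroup X] [NormedSpace ℝ X]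
    (Z : Submodule ℝ (StrongDual ℝ (StrongDual ℝ X)))
    (hdec : ∀ F : StrongDual ℝ (StrongDual ℝ X), ∃! p : X × Z,
      F = inclusionInDoubleDual ℝ X p.1 + (p.2 : StrongDual ℝ (StrongDual ℝ X)))
    (hnorm : ∀ (x : X) (z : Z),
      ‖inclusionInDoubleDual ℝ X x + (z : StrongDual ℝ (StrongDual ℝ X))‖ = ‖x‖ + ‖(z : StrongDual ℝ (StrongDual ℝ X))‖)
    (hext : Set.extremePoints ℝ (closedBall (0 : X) 1) = ∅) :
    -- the unit ball of `Z` is weak*-dense in the unit ball of `X**`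
    ∀ F : StrongDual ℝ (StrongDual ℝ X), ‖F‖ ≤ 1 → ∀ s : Finset (StrongDual ℝ X), ∀ ε : ℝ, 0 < ε →
      ∃ z ∈ Z, ‖z‖ ≤ 1 ∧ ∀ f ∈ s, |z f - F f| < ε := by
  intro F hF s ε hε
  have hball := closedBall_subset_weakStar_closure_of_extremePoints_subset
    (Z.convex.inter (convex_closedBall (0 : StrongDual ℝ (StrongDual ℝ X)) 1)) fun G hG ↦
      ⟨mem_of_mem_extremePoints_closedBall_of_l1_decomposition _ Z hdec hnorm hext hG,
        extremePoints_subset hG⟩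
  obtain ⟨_, ⟨z, ⟨hzZ, hz⟩, rfl⟩, hzF⟩ := WeakDual.exists_abs_sub_lt_of_mem_closure
    (hball ⟨F, mem_closedBall_zero_iff.2 hF, rfl⟩) s hε
  exact ⟨z, hzZ, (mem_closedBall_zero_iff (E := StrongDual ℝ (StrongDual ℝ X))).1 hz, hzF⟩

theorem stmt3 {X : Type*} [NormedAddCommGroup X] [NormedSpace ℝ X] [CompleteSpace X]
    (Z : Submodule ℝ (StrongDual ℝ (StrongDual ℝ X))) (hZc : IsClosed (Z : Set (StrongDual ℝ (StrongDual ℝ X))))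
    (hdec : ∀ F : StrongDual ℝ (StrongDual ℝ X), ∃! p : X × Z,
      F = inclusionInDoubleDual ℝ X p.1 + (p.2 : StrongDual ℝ (StrongDual ℝ X)))
    (hnorm : ∀ (x : X) (z : Z),
      ‖inclusionInDoubleDual ℝ X x + (z : StrongDual ℝ (StrongDual ℝ X))‖ = ‖x‖ + ‖(z : StrongDual ℝ (StrongDual ℝ X))‖)
    (hext : Set.extremePoints ℝ (closedBall (0 : X) 1) = ∅) :
    -- the unit ball of `Z` is weak*-dense in the unit ball of `X**`
    ∀ F : StrongDual ℝ (StrongDual ℝ X), ‖F‖ ≤ 1 → ∀ s : Finset (StrongDual ℝ X), ∀ ε : ℝ, 0 < ε →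
      ∃ z ∈ Z, ‖z‖ ≤ 1 ∧ ∀ f ∈ s, |z f - F f| < ε :=
  stmt3_general Z hdec hnorm hext
end

section
/- If X is a Banach space with the Daugavet property, then for all x ∈ S_X, x* ∈ S_{X*} and ε > 0 there exists y ∈ S_X with Re x*(y) > 1 − ε and ‖x + y‖ > 2 − ε. Consequently, every slice S(B_X, f, α) = {x ∈ B_X : Re f(x) > 1 − α} (f ∈ S_{X*}, 0 < α < 1) of the unit ball of X has diameter 2. -/
open Filter Metric

lemma daug_part1 {X : Type*} [NormedAddCommGroup X] [NormedSpace ℝ X]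
    (hX : DaugavetProperty X) (x : X) (hx : ‖x‖ = 1) (f : X →L[ℝ] ℝ) (hf : ‖f‖ = 1)
    (ε : ℝ) (hε : 0 < ε) :
    ∃ y : X, ‖y‖ = 1 ∧ f y > 1 - ε ∧ ‖x + y‖ > 2 - ε := by
  set δ := min (ε/3) (1/2) with hδdef
  have hδpos : 0 < δ := lt_min (by linarith) (by norm_num)
  have hδhalf : δ ≤ 1/2 := min_le_right _ _
  have hδε : 3*δ ≤ ε := by
    have := min_le_left (ε/3) (1/2); have : δ ≤ ε/3 := this; linarith
  set T := f.smulRight x with hT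
  have hTnorm : ‖T‖ = 1 := by
    rw [hT, ContinuousLinearMap.norm_smulRight_apply, hf, hx]; ring
  have h2 : ‖ContinuousLinearMap.id ℝ X + T‖ = 2 := by
    rw [hX T ⟨f, x, rfl⟩, hTnorm]; norm_num
  have hlt : (2 - δ : ℝ) < ‖ContinuousLinearMap.id ℝ X + T‖ := by rw [h2]; linarith
  obtain ⟨y₀, hy₀, hy₀2⟩ :=
    (ContinuousLinearMap.id ℝ X + T).exists_lt_apply_of_lt_opNorm hlt
  have happ : ∀ w : X, (ContinuousLinearMap.id ℝ X + T) w = w + f w • x := by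
    intro w; simp [hT]
  obtain ⟨y, hy1, hy2, hy3⟩ : ∃ y : X, ‖y‖ < 1 ∧ 2 - δ < ‖y + f y • x‖ ∧ 0 ≤ f y := by
    rw [happ] at hy₀2
    rcases le_or_gt 0 (f y₀) with h | h
    · exact ⟨y₀, hy₀, hy₀2, h⟩
    · refine ⟨-y₀, by simpa using hy₀, ?_, by simp; linarith⟩
      have he : (-y₀) + f (-y₀) • x = -(y₀ + f y₀ • x) := by
        rw [map_neg, neg_smul, ← neg_add]
      rw [he, norm_neg]; exact hy₀2
  have hfy_le : f y ≤ ‖y‖ := by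
    calc f y ≤ |f y| := le_abs_self _
    _ ≤ ‖f‖ * ‖y‖ := f.le_opNorm y
    _ = ‖y‖ := by rw [hf]; ring
  have hsum_le : ‖y + f y • x‖ ≤ ‖y‖ + f y := by
    calc ‖y + f y • x‖ ≤ ‖y‖ + ‖f y • x‖ := norm_add_le _ _
    _ = ‖y‖ + |f y| * ‖x‖ := by rw [norm_smul]; rfl
    _ = ‖y‖ + f y := by rw [hx, abs_of_nonneg hy3]; ring
  have hylb : 1 - δ < ‖y‖ := by linarith
  have hfy : 1 - δ < f y := by linarith
  have hypos : 0 < ‖y‖ := by linarith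
  set z := ‖y‖⁻¹ • y with hz
  have hinv1 : 1 ≤ ‖y‖⁻¹ := (one_le_inv₀ hypos).2 hy1.le
  have hznorm : ‖z‖ = 1 := by
    rw [hz, norm_smul, norm_inv, Real.norm_eq_abs, abs_of_pos hypos,
      inv_mul_cancel₀ hypos.ne']
  have hfz : f y ≤ f z := by
    have : f z = ‖y‖⁻¹ * f y := by rw [hz]; simp
    rw [this]
    exact le_mul_of_one_le_left hy3 hinv1
  have hzy : ‖z - y‖ < δ := by
    have he : z - y = (‖y‖⁻¹ - 1) • y := by rw [sub_smul, one_smul]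
    rw [he, norm_smul, Real.norm_eq_abs, abs_of_nonneg (by linarith), sub_mul,
      inv_mul_cancel₀ hypos.ne', one_mul]
    linarith
  have hxy : 2 - 2*δ < ‖x + y‖ := by
    have he : y + f y • x = (x + y) + (f y - 1) • x := by
      rw [sub_smul, one_smul]; abel
    have : ‖y + f y • x‖ ≤ ‖x + y‖ + ‖(f y - 1) • x‖ := by rw [he]; exact norm_add_le _ _
    have h3 : ‖(f y - 1) • x‖ = 1 - f y := by
      rw [norm_smul, hx, mul_one, Real.norm_eq_abs, abs_of_nonpos (by linarith)]; ring
    linarith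
  refine ⟨z, hznorm, by linarith, ?_⟩
  have : ‖x + y‖ ≤ ‖x + z‖ + ‖z - y‖ := by
    calc ‖x + y‖ = ‖(x + z) - (z - y)‖ := by congr 1; abel
    _ ≤ ‖x + z‖ + ‖z - y‖ := norm_sub_le _ _
  linarith

theorem stmt5 {X : Type*} [NormedAddCommGroup X] [NormedSpace ℝ X] [CompleteSpace X]
    (hX : DaugavetProperty X) :
    (∀ x : X, ‖x‖ = 1 → ∀ f : X →L[ℝ] ℝ, ‖f‖ = 1 → ∀ ε : ℝ, 0 < ε →
      ∃ y : X, ‖y‖ = 1 ∧ f y > 1 - ε ∧ ‖x + y‖ > 2 - ε) ∧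
    (∀ f : X →L[ℝ] ℝ, ‖f‖ = 1 → ∀ α : ℝ, 0 < α → α < 1 →
      Metric.diam {x : X | ‖x‖ ≤ 1 ∧ f x > 1 - α} = 2) := by
  refine ⟨fun x hx f hf ε hε => daug_part1 hX x hx f hf ε hε, ?_⟩
  intro f hf α hα hα1
  set S := {x : X | ‖x‖ ≤ 1 ∧ f x > 1 - α} with hS
  have hSsub : S ⊆ Metric.closedBall (0 : X) 1 := by
    intro a ha; rw [Metric.mem_closedBall, dist_zero_right]; exact ha.1
  have hbdd : Bornology.IsBounded S :=
    (Metric.isBounded_closedBall).subset hSsub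
  have hub : Metric.diam S ≤ 2 := by
    refine Metric.diam_le_of_forall_dist_le (by norm_num) ?_
    intro a ha b hb
    rw [dist_eq_norm]
    calc ‖a - b‖ ≤ ‖a‖ + ‖b‖ := norm_sub_le _ _
    _ ≤ 2 := by linarith [ha.1, hb.1]
  -- find a unit vector x in the slice
  have hlt : (1 - α : ℝ) < ‖f‖ := by rw [hf]; linarith
  obtain ⟨w, hw1, hw2⟩ := f.exists_lt_apply_of_lt_opNorm hlt
  obtain ⟨v, hv1, hv2⟩ : ∃ v : X, ‖v‖ < 1 ∧ 1 - α < f v := by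
    rcases le_or_gt 0 (f w) with h | h
    · exact ⟨w, hw1, by rwa [Real.norm_eq_abs, abs_of_nonneg h] at hw2⟩
    · refine ⟨-w, by simpa using hw1, ?_⟩
      rw [map_neg]
      rwa [Real.norm_eq_abs, abs_of_neg h] at hw2
  have hvpos : 0 < ‖v‖ := by
    rcases eq_or_lt_of_le (norm_nonneg v) with h | h
    · exfalso
      have : v = 0 := by rwa [eq_comm, norm_eq_zero] at h
      rw [this, map_zero] at hv2; linarith
    · exact h
  set x := ‖v‖⁻¹ • v with hxdef
  have hxnorm : ‖x‖ = 1 := by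
    rw [hxdef, norm_smul, norm_inv, Real.norm_eq_abs, abs_of_pos hvpos,
      inv_mul_cancel₀ hvpos.ne']
  have hfx : 1 - α < f x := by
    have he : f x = ‖v‖⁻¹ * f v := by rw [hxdef]; simp
    have hfvpos : 0 ≤ f v := by linarith
    have : f v ≤ f x := by
      rw [he]; exact le_mul_of_one_le_left hfvpos ((one_le_inv₀ hvpos).2 hv1.le)
    linarith
  have hxnormneg : ‖-x‖ = 1 := by rwa [norm_neg]
  refine le_antisymm hub ?_
  refine le_of_forall_pos_lt_add ?_
  intro ε hε
  set ε' := min ε α with hε'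
  have hε'pos : 0 < ε' := lt_min hε hα
  obtain ⟨y, hy1, hy2, hy3⟩ := daug_part1 hX (-x) hxnormneg f hf ε' hε'pos
  have hxS : x ∈ S := ⟨hxnorm.le, hfx⟩
  have hyS : y ∈ S := ⟨hy1.le, by have := min_le_right ε α; simp only [hε'] at hy2; linarith⟩
  have hdist : 2 - ε' < dist x y := by
    rw [dist_eq_norm]
    have : -x + y = -(x - y) := by abel
    rw [this, norm_neg] at hy3
    linarith
  have h1 : dist x y ≤ Metric.diam S := Metric.dist_le_diam_of_mem hbdd hxS hyS
  have h2 : ε' ≤ ε := min_le_left _ _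
  linarith
end

section
/- If a Banach space X has the Daugavet property, then the norm of X is extremely rough, i.e., for every u ∈ S_X, limsup_{‖h‖→0} (‖u+h‖ + ‖u−h‖ − 2)/‖h‖ = 2. In particular, the norm of X is not Fréchet differentiable at any point of S_X. -/
/-!
Fix `u` in the unit sphere and a norm-one functional `f` with `f u = 1`. The Daugavet equation
for the rank-one operator `Id - f ⊗ u` yields, for every `ε > 0`, a point `y` of the unit ball in
the slice `{f > 1 - ε}` with `‖y - u‖ > 2 - ε`. For `h = t • y` with small `t > 0`, the functional
`f` bounds `‖u + h‖` below by about `1 + t`, and `‖u - y‖ ≈ 2` bounds `‖u - h‖` below by about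
`1 + t`; so the roughness quotient at `h` is almost `2`. If the norm were differentiable at `u`,
`‖u + h‖ + ‖u - h‖ - 2` would be `o(‖h‖)` and the roughness would vanish.
-/

open Filter Metric

/-- The roughness `η(X, u)` of the norm of `X` at `u`:
`limsup_{‖h‖ → 0} (‖u + h‖ + ‖u - h‖ - 2) / ‖h‖`. -/
noncomputable def roughness {X : Type*} [NormedAddCommGroup X] (u : X) : ℝ :=
  Filter.limsup (fun h : X => (‖u + h‖ + ‖u - h‖ - 2) / ‖h‖) (nhdsWithin 0 {(0 : X)}ᶜ)

open Topology

section

variable {X : Type*} [NormedAddCommGroup X]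

noncomputable def roughnessQuotient (u h : X) : ℝ := (‖u + h‖ + ‖u - h‖ - 2) / ‖h‖

theorem roughness_eq_limsup (u : X) :
    roughness u = limsup (roughnessQuotient u) (𝓝[≠] 0) := rfl

theorem roughnessQuotient_le_two {u : X} (hu : ‖u‖ = 1) (h : X) :
    roughnessQuotient u h ≤ 2 := by
  rcases eq_or_ne h 0 with rfl | hh
  · simp [roughnessQuotient]
  rw [roughnessQuotient, div_le_iff₀ (norm_pos_iff.mpr hh)]
  linarith [norm_add_le u h, norm_sub_le u h]

variable [NormedSpace ℝ X]

theorem roughnessQuotient_nonneg {u : X} (hu : ‖u‖ = 1) (h : X) :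
    0 ≤ roughnessQuotient u h := by
  have : ‖(u + h) + (u - h)‖ ≤ ‖u + h‖ + ‖u - h‖ := norm_add_le _ _
  rw [add_add_sub_cancel, ← two_smul ℝ, norm_smul, hu] at this
  exact div_nonneg (by norm_num at this; linarith) (norm_nonneg h)

theorem roughness_eq_two_of_frequently {u : X} (hu : ‖u‖ = 1)
    (H : ∀ ρ ∈ Set.Ioo (0 : ℝ) 1, ∃ᶠ h in 𝓝[≠] 0, 2 - ρ ≤ roughnessQuotient u h) :
    roughness u = 2 := by
  have := nontrivial_of_ne u 0 (ne_zero_of_norm_ne_zero (by simp [hu]))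
  have hbdd : IsBoundedUnder (· ≤ ·) (𝓝[≠] (0 : X)) (roughnessQuotient u) :=
    isBoundedUnder_of ⟨2, roughnessQuotient_le_two hu⟩
  have hcobdd : IsCoboundedUnder (· ≤ ·) (𝓝[≠] (0 : X)) (roughnessQuotient u) :=
    (isBoundedUnder_of ⟨0, roughnessQuotient_nonneg hu⟩).isCoboundedUnder_le
  rw [roughness_eq_limsup]
  refine le_antisymm (limsup_le_of_le hcobdd (.of_forall (roughnessQuotient_le_two hu))) ?_
  refine le_of_forall_pos_le_add fun ρ hρ => ?_
  have hρ' : min ρ (1 / 2) ∈ Set.Ioo (0 : ℝ) 1 :=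
    ⟨by positivity, by linarith [min_le_right ρ (1 / 2)]⟩
  linarith [le_limsup_of_frequently_le (H _ hρ') hbdd, min_le_left ρ (1 / 2)]

theorem roughness_eq_zero_of_differentiableAt {u : X} (hu : ‖u‖ = 1)
    (hd : DifferentiableAt ℝ (‖·‖) u) : roughness u = 0 := by
  have := nontrivial_of_ne u 0 (ne_zero_of_norm_ne_zero (by simp [hu]))
  obtain ⟨g, hg⟩ := hd
  have hplus : HasFDerivAt (fun h : X => ‖u + h‖) g 0 :=
    (hasFDerivAt_comp_add_left u).2 (by rwa [add_zero])
  have hminus : HasFDerivAt (fun h : X => ‖u - h‖) (-g) 0 := by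
    have hneg : HasFDerivAt (fun h : X => -h) (-ContinuousLinearMap.id ℝ X) 0 :=
      (hasFDerivAt_id 0).neg
    have := HasFDerivAt.comp (0 : X) (g := fun h => ‖u + h‖) (by rwa [neg_zero]) hneg
    simpa [Function.comp_def, ← sub_eq_add_neg] using this
  have hsum : HasFDerivAt (fun h : X => ‖u + h‖ + ‖u - h‖) (0 : X →L[ℝ] ℝ) 0 :=
    (hplus.add hminus).congr_fderiv (add_neg_cancel g)
  have hO : (fun h : X => ‖u + h‖ + ‖u - h‖ - 2) =o[𝓝 0] fun h => ‖h‖ := by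
    simpa [hu, one_add_one_eq_two] using
      (hasFDerivAt_iff_isLittleO_nhds_zero.mp hsum).norm_right
  exact ((hO.tendsto_div_nhds_zero).mono_left nhdsWithin_le_nhds).limsup_eq

theorem lt_norm_add_smul_add_norm_sub_smul {u y : X} {f : StrongDual ℝ X} {ε t : ℝ}
    (hf : ‖f‖ ≤ 1) (hfu : f u = 1) (hy : ‖y‖ ≤ 1) (hfy : 1 - ε < f y)
    (hyu : 2 - ε < ‖y - u‖) (ht0 : 0 ≤ t) (ht1 : t ≤ 1) :
    2 * t - 2 * ε < ‖u + t • y‖ + ‖u - t • y‖ - 2 := by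
  have hε : 0 < ε := by linarith [(le_abs_self _).trans (f.le_of_opNorm_le hf y), hy]
  have hplus : 1 + t * f y ≤ ‖u + t • y‖ := by
    simpa [hfu] using (le_abs_self _).trans (f.le_of_opNorm_le hf (u + t • y))
  have hminus : ‖u - y‖ ≤ ‖u - t • y‖ + (1 - t) := by
    calc ‖u - y‖ = ‖(u - t • y) - (1 - t) • y‖ := by congr 1; module
      _ ≤ ‖u - t • y‖ + (1 - t) * ‖y‖ := by
        grw [norm_sub_le, norm_smul, Real.norm_of_nonneg (by linarith)]
      _ ≤ ‖u - t • y‖ + (1 - t) := by gcongr; nlinarith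
  rw [norm_sub_rev] at hyu
  nlinarith

theorem DaugavetProperty.exists_norm_sub_smul_gt (hX : DaugavetProperty X) {u : X}
    (hu : ‖u‖ = 1) {f : StrongDual ℝ X} (hf : ‖f‖ = 1) {ε : ℝ} (hε : 0 < ε) :
    ∃ z : X, ‖z‖ < 1 ∧ 0 ≤ f z ∧ 2 - ε < ‖z - f z • u‖ := by
  set T := ContinuousLinearMap.id ℝ X + f.smulRight (-u)
  have hT : ‖T‖ = 2 := by
    rw [hX _ ⟨f, -u, rfl⟩, ContinuousLinearMap.norm_smulRight_apply, hf, norm_neg, hu]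
    norm_num
  have hTz (z : X) : T z = z - f z • u := by simp [T, sub_eq_add_neg]
  obtain ⟨z, hz, hTz'⟩ := T.exists_lt_apply_of_lt_opNorm (show 2 - ε < ‖T‖ by linarith)
  rw [hTz] at hTz'
  rcases le_total 0 (f z) with hfz | hfz
  · exact ⟨z, hz, hfz, hTz'⟩
  · refine ⟨-z, by rwa [norm_neg], by simpa using hfz, ?_⟩
    rwa [map_neg, neg_smul, sub_neg_eq_add, ← norm_neg, neg_add, neg_neg, ← sub_eq_add_neg]

theorem DaugavetProperty.exists_mem_slice_norm_sub_gt (hX : DaugavetProperty X) {u : X}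
    (hu : ‖u‖ = 1) {f : StrongDual ℝ X} (hf : ‖f‖ = 1) {ε : ℝ} (hε : 0 < ε) :
    ∃ y : X, ‖y‖ ≤ 1 ∧ 1 - ε < f y ∧ 2 - ε < ‖y - u‖ := by
  obtain ⟨y, hy, hfy, hyu⟩ := hX.exists_norm_sub_smul_gt hu hf (half_pos hε)
  have hfy1 : f y ≤ 1 := by
    linarith [(le_abs_self _).trans (f.le_of_opNorm_le hf.le y)]
  have hnear : ‖y - f y • u‖ ≤ ‖y‖ + f y := by
    simpa [norm_smul, hu, abs_of_nonneg hfy] using norm_sub_le y (f y • u)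
  have hfar : ‖y - f y • u‖ ≤ ‖y - u‖ + (1 - f y) := by
    calc ‖y - f y • u‖ = ‖(y - u) + (1 - f y) • u‖ := by congr 1; module
      _ ≤ ‖y - u‖ + (1 - f y) := by
        grw [norm_add_le, norm_smul, hu, Real.norm_of_nonneg (by linarith), mul_one]
  exact ⟨y, hy.le, by linarith, by linarith⟩

theorem DaugavetProperty.frequently_two_sub_le_roughnessQuotient (hX : DaugavetProperty X)
    {u : X} (hu : ‖u‖ = 1) {ρ : ℝ} (hρ : 0 < ρ) (hρ1 : ρ < 1) :
    ∃ᶠ h in 𝓝[≠] 0, 2 - ρ ≤ roughnessQuotient u h := by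
  obtain ⟨f, hf, hfu⟩ := exists_dual_vector ℝ u (ne_zero_of_norm_ne_zero (by simp [hu]))
  rw [hu, RCLike.ofReal_one] at hfu
  rw [(nhdsWithin_hasBasis nhds_basis_ball _).frequently_iff]
  intro δ hδ
  set t := min (δ / 2) 1
  have ht0 : 0 < t := by positivity
  obtain ⟨y, hy, hfy, hyu⟩ :=
    hX.exists_mem_slice_norm_sub_gt hu hf (ε := ρ * t / 2) (by positivity)
  have hty : ‖t • y‖ ≤ t := by
    rw [norm_smul, Real.norm_of_nonneg ht0.le]; exact mul_le_of_le_one_right ht0.le hy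
  have hty0 : 0 < ‖t • y‖ := by
    have : 1 - ρ * t / 2 < ‖y‖ := by linarith [norm_sub_le y u]
    rw [norm_smul, Real.norm_of_nonneg ht0.le]
    exact mul_pos ht0 (lt_of_le_of_lt (by nlinarith [min_le_right (δ / 2) 1]) this)
  refine ⟨t • y, ⟨?_, norm_pos_iff.mp hty0⟩, ?_⟩
  · rw [mem_ball_zero_iff]; linarith [min_le_left (δ / 2) 1]
  · have := lt_norm_add_smul_add_norm_sub_smul hf.le hfu hy hfy hyu ht0.le (min_le_right _ _)
    rw [roughnessQuotient, le_div_iff₀ hty0]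
    nlinarith

end

theorem stmt6_general {X : Type*} [NormedAddCommGroup X] [NormedSpace ℝ X]
    (hX : DaugavetProperty X) :
    ∀ u : X, ‖u‖ = 1 →
      roughness u = 2 ∧ ¬ DifferentiableAt ℝ (fun x : X => ‖x‖) u := by
  intro u hu
  have hrough : roughness u = 2 := roughness_eq_two_of_frequently hu fun ρ hρ =>
    hX.frequently_two_sub_le_roughnessQuotient hu hρ.1 hρ.2
  refine ⟨hrough, fun hd => ?_⟩
  linarith [roughness_eq_zero_of_differentiableAt hu hd]

theorem stmt6 {X : Type*} [NormedAddCommGroup X] [NormedSpace ℝ X] [CompleteSpace X]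
    (hX : DaugavetProperty X) :
    ∀ u : X, ‖u‖ = 1 →
      roughness u = 2 ∧ ¬ DifferentiableAt ℝ (fun x : X => ‖x‖) u :=
  stmt6_general hX
end

section
/- Let X be a Banach space and δ > 0. Then the norm of X is δ-rough (η(X,u) ≥ δ for all u ∈ S_X) if and only if every nonempty weak*-slice of the unit ball of X* has diameter at least δ. -/
open Filter Metric

/-! If `η(u) ≥ δ`, choose a small `h` with `‖u + h‖ + ‖u - h‖ - 2 ≳ δ ‖h‖`. Functionals `f`, `g`
norming `u + h` and `u - h` lie in the slice at `u` of width `2 ‖h‖`, and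
`(f - g) h ≥ ‖u + h‖ + ‖u - h‖ - 2`, so `‖f - g‖ ≳ δ`.

Conversely, take `f`, `g` in a thin slice at `u` of width `α` with `‖f - g‖ ≳ δ`, and a unit `w`
with `(f - g) w ≳ δ`. For `h = t • w`,
`‖u + h‖ + ‖u - h‖ ≥ f (u + h) + g (u - h) > 2 - 2α + t (f - g) w`,
which gives `η(u) ≳ δ` once `α ≪ t`. -/

open Topology

theorem Metric.exists_lt_dist_of_lt_diam {α : Type*} [PseudoMetricSpace α] {s : Set α}
    (hs : s.Nonempty) {c : ℝ} (hc : c < diam s) : ∃ x ∈ s, ∃ y ∈ s, c < dist x y := by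
  by_contra! h
  exact (diam_le_of_forall_dist_le_of_nonempty hs h).not_gt hc

section

variable {X : Type*} [NormedAddCommGroup X] [NormedSpace ℝ X]

theorem ContinuousLinearMap.exists_norm_eq_one_lt_apply [Nontrivial X] (φ : X →L[ℝ] ℝ) {c : ℝ}
    (hc : c < ‖φ‖) : ∃ w : X, ‖w‖ = 1 ∧ c < φ w := by
  rw [← φ.sSup_sphere_eq_norm] at hc
  obtain ⟨-, ⟨w, hw, rfl⟩, hcw : c < |φ w|⟩ :=
    exists_lt_of_lt_csSup ((NormedSpace.sphere_nonempty.2 zero_le_one).image _) hc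
  rw [mem_sphere_zero_iff_norm] at hw
  rcases abs_cases (φ w) with ⟨hφ, -⟩ | ⟨hφ, -⟩
  · exact ⟨w, hw, hφ ▸ hcw⟩
  · exact ⟨-w, by rwa [norm_neg], by rwa [map_neg, ← hφ]⟩

theorem two_le_norm_add_add_norm_sub {u : X} (hu : ‖u‖ = 1) (h : X) : 2 ≤ ‖u + h‖ + ‖u - h‖ := by
  calc (2 : ℝ) = ‖(u + h) + (u - h)‖ := by
        rw [add_add_sub_cancel, ← two_smul ℝ, norm_smul, hu]; norm_num
    _ ≤ ‖u + h‖ + ‖u - h‖ := norm_add_le _ _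

theorem le_roughness_iff {u : X} (hu : ‖u‖ = 1) {c : ℝ} :
    c ≤ roughness u ↔ ∀ c' < c, ∀ r > 0,
      ∃ h : X, ‖h‖ < r ∧ h ≠ 0 ∧ c' < (‖u + h‖ + ‖u - h‖ - 2) / ‖h‖ := by
  have : Nontrivial X := ⟨u, 0, norm_ne_zero_iff.1 (by simp [hu])⟩
  have hbdd : IsBoundedUnder (· ≤ ·) (𝓝[≠] (0 : X))
      (fun h : X => (‖u + h‖ + ‖u - h‖ - 2) / ‖h‖) :=
    isBoundedUnder_of ⟨2, fun h => div_le_of_le_mul₀ (norm_nonneg h) zero_le_two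
      (by linarith [norm_add_le u h, norm_sub_le u h])⟩
  have hcobdd : IsCoboundedUnder (· ≤ ·) (𝓝[≠] (0 : X))
      (fun h : X => (‖u + h‖ + ‖u - h‖ - 2) / ‖h‖) :=
    isCoboundedUnder_le_of_le _ fun h =>
      div_nonneg (by linarith [two_le_norm_add_add_norm_sub hu h]) (norm_nonneg h)
  simp only [roughness, le_limsup_iff hcobdd hbdd, nhdsWithin_basis_ball.frequently_iff,
    Set.mem_inter_iff, mem_ball_zero_iff, Set.mem_compl_singleton_iff, and_assoc]

def weakStarSlice (x : X) (α : ℝ) : Set (X →L[ℝ] ℝ) := {f | ‖f‖ ≤ 1 ∧ f x > 1 - α}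

theorem isBounded_weakStarSlice (x : X) (α : ℝ) : Bornology.IsBounded (weakStarSlice x α) :=
  isBounded_closedBall.subset fun _ hf => mem_closedBall_zero_iff.2 hf.1

theorem weakStarSlice_nonempty {x : X} (hx : ‖x‖ = 1) {α : ℝ} (hα : 0 < α) :
    (weakStarSlice x α).Nonempty := by
  obtain ⟨f, hf, hfx⟩ := exists_dual_vector'' ℝ x
  exact ⟨f, hf, by simp [hfx, hx, hα]⟩

theorem abs_apply_le_norm_of_norm_le_one {f : X →L[ℝ] ℝ} (hf : ‖f‖ ≤ 1) (y : X) :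
    |f y| ≤ ‖y‖ := by
  simpa using f.le_of_opNorm_le hf y

theorem exists_mem_weakStarSlice_le_norm_sub {x h : X} (hx : ‖x‖ = 1) {α : ℝ}
    (hh : 2 * ‖h‖ < α) :
    ∃ f ∈ weakStarSlice x α, ∃ g ∈ weakStarSlice x α,
      (‖x + h‖ + ‖x - h‖ - 2) / ‖h‖ ≤ ‖f - g‖ := by
  obtain ⟨f, hf, hfx⟩ := exists_dual_vector'' ℝ (x + h)
  obtain ⟨g, hg, hgx⟩ := exists_dual_vector'' ℝ (x - h)
  simp only [map_add, map_sub, RCLike.ofReal_real_eq_id, id] at hfx hgx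
  have hfh := abs_le.1 (abs_apply_le_norm_of_norm_le_one hf h)
  have hgh := abs_le.1 (abs_apply_le_norm_of_norm_le_one hg h)
  have hfx1 := (abs_le.1 ((abs_apply_le_norm_of_norm_le_one hf x).trans_eq hx)).2
  have hgx1 := (abs_le.1 ((abs_apply_le_norm_of_norm_le_one hg x).trans_eq hx)).2
  have hx_add : 1 - ‖h‖ ≤ ‖x + h‖ := by simpa [hx] using norm_sub_norm_le x (-h)
  have hx_sub : 1 - ‖h‖ ≤ ‖x - h‖ := by simpa [hx] using norm_sub_norm_le x h
  refine ⟨f, ⟨hf, by linarith⟩, g, ⟨hg, by linarith⟩, ?_⟩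
  refine div_le_of_le_mul₀ (norm_nonneg h) (norm_nonneg _) ?_
  calc ‖x + h‖ + ‖x - h‖ - 2 ≤ (f - g) h := by
        rw [sub_apply]; linarith
    _ ≤ ‖f - g‖ * ‖h‖ := (le_abs_self _).trans ((f - g).le_opNorm h)

theorem sub_apply_sub_lt_of_mem_weakStarSlice {u w : X} {α t : ℝ} {f g : X →L[ℝ] ℝ}
    (hf : f ∈ weakStarSlice u α) (hg : g ∈ weakStarSlice u α) (hw : ‖w‖ = 1) (ht : 0 < t) :
    (f - g) w - 2 * α / t < (‖u + t • w‖ + ‖u - t • w‖ - 2) / ‖t • w‖ := by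
  have hfu := (abs_le.1 (abs_apply_le_norm_of_norm_le_one hf.1 (u + t • w))).2
  have hgu := (abs_le.1 (abs_apply_le_norm_of_norm_le_one hg.1 (u - t • w))).2
  simp only [map_add, map_sub, map_smul, smul_eq_mul] at hfu hgu
  rw [norm_smul, hw, Real.norm_of_nonneg ht.le, mul_one, lt_div_iff₀ ht, sub_mul,
    div_mul_cancel₀ _ ht.ne', sub_apply]
  linarith [hf.2, hg.2]

end

theorem stmt7_general {X : Type*} [NormedAddCommGroup X] [NormedSpace ℝ X]
    (δ : ℝ) :
    (∀ u : X, ‖u‖ = 1 → δ ≤ roughness u) ↔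
      (∀ x : X, ‖x‖ = 1 → ∀ α : ℝ, 0 < α → α < 1 →
        ({f : X →L[ℝ] ℝ | ‖f‖ ≤ 1 ∧ f x > 1 - α}.Nonempty →
          δ ≤ Metric.diam {f : X →L[ℝ] ℝ | ‖f‖ ≤ 1 ∧ f x > 1 - α})) := by
  refine ⟨fun hrough x hx α hα _ _ => ?_, fun hslice u hu => ?_⟩
  · refine le_of_forall_lt fun c hc => ?_
    obtain ⟨h, hhα, -, hch⟩ := (le_roughness_iff hx).1 (hrough x hx) c hc (α / 2) (by positivity)
    obtain ⟨f, hf, g, hg, hfg⟩ :=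
      exists_mem_weakStarSlice_le_norm_sub hx (by linarith : 2 * ‖h‖ < α)
    calc c < _ := hch
      _ ≤ dist f g := hfg.trans_eq (dist_eq_norm f g).symm
      _ ≤ diam (weakStarSlice x α) := dist_le_diam_of_mem (isBounded_weakStarSlice x α) hf hg
  · have : Nontrivial X := ⟨u, 0, norm_ne_zero_iff.1 (by simp [hu])⟩
    refine (le_roughness_iff hu).2 fun c hc r hr => ?_
    -- a slice of width `α ≤ t ε / 4` costs at most `ε / 2` when probed at scale `t`
    set ε := δ - c
    set t := r / 2 with ht
    set α := min (1 / 2) (t * ε / 4)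
    have hα : 0 < α := lt_min (by norm_num) (by positivity)
    have hαε : 2 * α / t ≤ ε / 2 := by
      rw [div_le_iff₀ (by positivity)]; linarith [min_le_right (1 / 2 : ℝ) (t * ε / 4)]
    have hα1 : α < 1 := by linarith [min_le_left (1 / 2 : ℝ) (t * ε / 4)]
    have hdiam : δ ≤ diam (weakStarSlice u α) :=
      hslice u hu α hα hα1 (weakStarSlice_nonempty hu hα)
    obtain ⟨f, hf, g, hg, hfg⟩ :=
      exists_lt_dist_of_lt_diam (weakStarSlice_nonempty hu hα) (by linarith : c + ε / 2 < _)
    obtain ⟨w, hw, hcw⟩ := (f - g).exists_norm_eq_one_lt_apply (dist_eq_norm f g ▸ hfg)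
    refine ⟨t • w, ?_, smul_ne_zero (by positivity) (norm_ne_zero_iff.1 (by simp [hw])), ?_⟩
    · rw [norm_smul, hw, Real.norm_of_nonneg (by positivity)]; linarith
    · linarith [sub_apply_sub_lt_of_mem_weakStarSlice hf hg hw (by positivity : 0 < t)]

theorem stmt7 {X : Type*} [NormedAddCommGroup X] [NormedSpace ℝ X] [CompleteSpace X]
    (δ : ℝ) (hδ : 0 < δ) :
    (∀ u : X, ‖u‖ = 1 → δ ≤ roughness u) ↔
      (∀ x : X, ‖x‖ = 1 → ∀ α : ℝ, 0 < α → α < 1 →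
        ({f : X →L[ℝ] ℝ | ‖f‖ ≤ 1 ∧ f x > 1 - α}.Nonempty →
          δ ≤ Metric.diam {f : X →L[ℝ] ℝ | ‖f‖ ≤ 1 ∧ f x > 1 - α})) :=
  stmt7_general δ
end

section
/- Let {X_i}_{i∈I} be a family of Banach spaces, 𝒰 a free (nonprincipal) ultrafilter on I, and δ > 0. If the norm of each X_i is δ-rough, then the norm of the Banach ultraproduct (X_i)_𝒰 is δ-rough. -/
open Filter Metric

/-- From `δ ≤ roughness y` at a unit vector `y`, extract, for every `t > 0` and `ε > 0`,
a perturbation of norm exactly `t` witnessing roughness `δ - ε`. -/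
lemma exists_pert {E : Type*} [NormedAddCommGroup E] [NormedSpace ℝ E] {y : E} (hy : ‖y‖ = 1)
    {δ t ε : ℝ} (hδ : δ ≤ roughness y) (ht : 0 < t) (hε : 0 < ε) :
    ∃ h : E, ‖h‖ = t ∧ 2 + (δ - ε) * t ≤ ‖y + h‖ + ‖y - h‖ := by
  have hyne : y ≠ 0 := by
    intro h; rw [h, norm_zero] at hy; norm_num at hy
  haveI : Nontrivial E := ⟨⟨y, 0, hyne⟩⟩
  haveI : (nhdsWithin (0 : E) {(0 : E)}ᶜ).NeBot := Module.punctured_nhds_neBot ℝ E 0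
  set f : E → ℝ := fun h => (‖y + h‖ + ‖y - h‖ - 2) / ‖h‖ with hf
  have hnum : ∀ h : E, 2 ≤ ‖y + h‖ + ‖y - h‖ := by
    intro h
    have : ‖(y + h) + (y - h)‖ ≤ ‖y + h‖ + ‖y - h‖ := norm_add_le _ _
    have he : (y + h) + (y - h) = (2 : ℝ) • y := by
      rw [two_smul]; abel
    rw [he, norm_smul] at this
    simp [hy] at this
    linarith
  have hcob : (nhdsWithin (0 : E) {(0 : E)}ᶜ).IsCoboundedUnder (· ≤ ·) f := by
    refine Filter.isCoboundedUnder_le_of_eventually_le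
      (nhdsWithin (0 : E) {(0 : E)}ᶜ) (x := (0 : ℝ)) ?_
    filter_upwards with h
    have := hnum h
    exact div_nonneg (by linarith) (norm_nonneg _)
  have hlt : δ - ε < Filter.limsup f (nhdsWithin (0 : E) {(0 : E)}ᶜ) :=
    lt_of_lt_of_le (by linarith) hδ
  have hfreq := Filter.frequently_lt_of_lt_limsup hcob hlt
  have hev : ∀ᶠ h in nhdsWithin (0 : E) {(0 : E)}ᶜ, h ∈ ball (0 : E) t ∧ h ≠ 0 := by
    apply Filter.Eventually.and
    · exact nhdsWithin_le_nhds (ball_mem_nhds _ ht)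
    · exact eventually_mem_nhdsWithin
  obtain ⟨h0, hflt, hb0, hne0⟩ := (hfreq.and_eventually hev).exists
  set s : ℝ := ‖h0‖ with hs
  have hspos : 0 < s := norm_pos_iff.mpr hne0
  have hst : s < t := by simpa [hs] using mem_ball_zero_iff.mp hb0
  refine ⟨(t / s) • h0, ?_, ?_⟩
  · rw [norm_smul, Real.norm_eq_abs, abs_of_pos (div_pos ht hspos), div_mul_cancel₀]
    exact ne_of_gt hspos
  · set h : E := (t / s) • h0 with hh
    have hnum0 : (δ - ε) * s < ‖y + h0‖ + ‖y - h0‖ - 2 := by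
      have := hflt
      rw [hf] at this
      exact (lt_div_iff₀ hspos).mp this
    set c : ℝ := s / t with hc
    have hc0 : 0 < c := div_pos hspos ht
    have hc1 : c ≤ 1 := by
      rw [hc, div_le_one ht]; exact hst.le
    have hch : c • h = h0 := by
      have h1 : c * (t / s) = 1 := by
        rw [hc]; field_simp
      rw [hh, smul_smul, h1, one_smul]
    have key : ∀ z : E, ‖y + c • z‖ ≤ c * ‖y + z‖ + (1 - c) := by
      intro z
      have he : y + c • z = c • (y + z) + (1 - c) • y := by
        rw [smul_add, sub_smul, one_smul]; abel
      calc ‖y + c • z‖ = ‖c • (y + z) + (1 - c) • y‖ := by rw [he]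
        _ ≤ ‖c • (y + z)‖ + ‖(1 - c) • y‖ := norm_add_le _ _
        _ = c * ‖y + z‖ + (1 - c) := by
            rw [norm_smul, norm_smul, Real.norm_eq_abs, Real.norm_eq_abs,
              abs_of_pos hc0, abs_of_nonneg (by linarith), hy, mul_one]
    have k1 : ‖y + h0‖ ≤ c * ‖y + h‖ + (1 - c) := by
      have := key h; rwa [hch] at this
    have k2 : ‖y - h0‖ ≤ c * ‖y - h‖ + (1 - c) := by
      have := key (-h)
      rw [smul_neg, hch] at this
      simpa [sub_eq_add_neg] using this
    have hcomb : (δ - ε) * s < c * (‖y + h‖ + ‖y - h‖ - 2) := by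
      have : ‖y + h0‖ + ‖y - h0‖ - 2 ≤ c * (‖y + h‖ + ‖y - h‖ - 2) := by
        have := add_le_add k1 k2; nlinarith
      linarith
    -- multiply by t / s
    have hts : (δ - ε) * t < ‖y + h‖ + ‖y - h‖ - 2 := by
      have h1 : (δ - ε) * s * t < c * (‖y + h‖ + ‖y - h‖ - 2) * t :=
        mul_lt_mul_of_pos_right hcomb ht
      have h2 : c * (‖y + h‖ + ‖y - h‖ - 2) * t = s * (‖y + h‖ + ‖y - h‖ - 2) := by
        rw [hc]; field_simp
      rw [h2] at h1
      have h3 : s * ((δ - ε) * t) < s * (‖y + h‖ + ‖y - h‖ - 2) := by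
        nlinarith
      exact lt_of_mul_lt_mul_left h3 hspos.le
    linarith

/-- If every member of a family of Banach spaces is `δ`-rough, then so is the Banach
ultraproduct, realized as a Banach space `U` together with a linear quotient map
`π : [⊕ᵢ Xᵢ]_{ℓ∞} → U` satisfying `‖π x‖ = lim_𝒰 ‖xᵢ‖`. -/
theorem stmt8 {I : Type*} (𝒰 : Ultrafilter I) (hfree : ∀ i : I, (𝒰 : Filter I) ≠ pure i)
    (X : I → Type*) [∀ i, NormedAddCommGroup (X i)] [∀ i, NormedSpace ℝ (X i)]
    [∀ i, CompleteSpace (X i)]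
    (U : Type*) [NormedAddCommGroup U] [NormedSpace ℝ U] [CompleteSpace U]
    (π : lp X ⊤ →ₗ[ℝ] U) (hsurj : Function.Surjective π)
    (hπ : ∀ x : lp X ⊤, Tendsto (fun i => ‖x i‖) (𝒰 : Filter I) (nhds ‖π x‖))
    (δ : ℝ) (hδ : 0 < δ)
    (hrough : ∀ i, ∀ u : X i, ‖u‖ = 1 → δ ≤ roughness u) :
    ∀ u : U, ‖u‖ = 1 → δ ≤ roughness u := by
  intro u hu
  obtain ⟨x, hx⟩ := hsurj u
  -- the normalized representative
  set y : ∀ i, X i := fun i => ‖x i‖⁻¹ • x i with hydef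
  have hynorm : ∀ i, x i ≠ 0 → ‖y i‖ = 1 := by
    intro i hi
    show ‖‖x i‖⁻¹ • x i‖ = 1
    rw [norm_smul, Real.norm_eq_abs, abs_inv, abs_norm,
      inv_mul_cancel₀ (norm_ne_zero_iff.mpr hi)]
  have hybdd : ∀ i, ‖y i‖ ≤ 1 := by
    intro i
    rcases eq_or_ne (x i) 0 with h | h
    · simp [hydef, h]
    · rw [hynorm i h]
  have hymem : Memℓp y ⊤ := memℓp_infty ⟨1, by rintro _ ⟨i, rfl⟩; exact hybdd i⟩
  set Y : lp X ⊤ := ⟨y, hymem⟩ with hY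
  have hYapp : ∀ i, Y i = y i := fun i => rfl
  -- the eventually-good set
  have hxlim : Tendsto (fun i => ‖x i‖) (𝒰 : Filter I) (nhds 1) := by
    have := hπ x; rwa [hx, hu] at this
  have hA : ∀ᶠ i in (𝒰 : Filter I), 1 / 2 < ‖x i‖ :=
    hxlim.eventually (eventually_gt_nhds (by norm_num))
  -- π Y = u
  have hYu : π Y = u := by
    have ht0 : Tendsto (fun i => ‖(Y - x) i‖) (𝒰 : Filter I) (nhds 0) := by
      have habs : Tendsto (fun i => |1 - ‖x i‖|) (𝒰 : Filter I) (nhds 0) := by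
        have := (tendsto_const_nhds (x := (1 : ℝ)).sub hxlim).abs
        simpa using this
      apply habs.congr'
      filter_upwards [hA] with i hi
      have hxi : x i ≠ 0 := by
        intro h; rw [h, norm_zero] at hi; norm_num at hi
      have hxin : ‖x i‖ ≠ 0 := norm_ne_zero_iff.mpr hxi
      have he : (Y - x) i = (‖x i‖⁻¹ - 1) • x i := by
        rw [lp.coeFn_sub]
        show y i - x i = _
        show ‖x i‖⁻¹ • x i - x i = _
        rw [sub_smul, one_smul]
      rw [he, norm_smul, Real.norm_eq_abs]
      have h2 : |‖x i‖⁻¹ - 1| * ‖x i‖ = |(‖x i‖⁻¹ - 1) * ‖x i‖| := by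
        rw [abs_mul, abs_norm]
      rw [h2, sub_mul, inv_mul_cancel₀ hxin, one_mul]
    have := tendsto_nhds_unique (hπ (Y - x)) ht0
    have h0 : π (Y - x) = 0 := norm_eq_zero.mp this
    rw [map_sub, sub_eq_zero] at h0
    rw [h0, hx]
  -- main: δ ≤ limsup
  set f : U → ℝ := fun w => (‖u + w‖ + ‖u - w‖ - 2) / ‖w‖ with hfdef
  have hbdd : (nhdsWithin (0 : U) {(0 : U)}ᶜ).IsBoundedUnder (· ≤ ·) f := by
    refine ⟨2, eventually_map.2 ?_⟩
    filter_upwards [eventually_mem_nhdsWithin] with w hw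
    have hwne : w ≠ (0 : U) := hw
    have hwpos : 0 < ‖w‖ := norm_pos_iff.mpr hwne
    rw [hfdef]
    rw [div_le_iff₀ hwpos]
    have h1 : ‖u + w‖ ≤ ‖u‖ + ‖w‖ := norm_add_le _ _
    have h2 : ‖u - w‖ ≤ ‖u‖ + ‖w‖ := norm_sub_le _ _
    rw [hu] at h1 h2
    linarith
  have key : ∀ ε : ℝ, 0 < ε → δ - ε ≤ roughness u := by
    intro ε hε
    apply Filter.le_limsup_of_frequently_le _ hbdd
    rw [Filter.frequently_iff]
    intro S hS
    obtain ⟨r, hr0, hrsub⟩ := Metric.mem_nhdsWithin_iff.mp hS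
    set t : ℝ := r / 2 with htdef
    have ht0 : 0 < t := by positivity
    have htr : t < r := by rw [htdef]; linarith
    -- choose perturbations coordinatewise
    have hch : ∀ i, ∃ h : X i, ‖h‖ ≤ t ∧
        (1 / 2 < ‖x i‖ → ‖h‖ = t ∧ 2 + (δ - ε) * t ≤ ‖y i + h‖ + ‖y i - h‖) := by
      intro i
      by_cases hi : 1 / 2 < ‖x i‖
      · have hxi : x i ≠ 0 := by
          intro h; rw [h, norm_zero] at hi; norm_num at hi
        have h1 : ‖y i‖ = 1 := hynorm i hxi
        obtain ⟨h, hh1, hh2⟩ := exists_pert h1 (hrough i (y i) h1) ht0 hε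
        exact ⟨h, hh1.le, fun _ => ⟨hh1, hh2⟩⟩
      · exact ⟨0, by simp [ht0.le], fun h => absurd h hi⟩
    choose h hh1 hh2 using hch
    have hhmem : Memℓp h ⊤ := memℓp_infty ⟨t, by rintro _ ⟨i, rfl⟩; exact hh1 i⟩
    set H : lp X ⊤ := ⟨h, hhmem⟩ with hH
    set w : U := π H with hw
    have hHapp : ∀ i, H i = h i := fun i => rfl
    -- ‖w‖ = t
    have hwnorm : ‖w‖ = t := by
      have t1 : Tendsto (fun i => ‖H i‖) (𝒰 : Filter I) (nhds t) := by
        apply tendsto_const_nhds.congr'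
        filter_upwards [hA] with i hi
        exact ((hh2 i hi).1).symm
      rw [hw]
      exact tendsto_nhds_unique (hπ H) t1
    have hwne : w ≠ 0 := by
      intro h0; rw [h0, norm_zero] at hwnorm; exact ht0.ne' hwnorm.symm
    -- the roughness estimate at w
    have hineq : 2 + (δ - ε) * t ≤ ‖u + w‖ + ‖u - w‖ := by
      have tplus : Tendsto (fun i => ‖(Y + H) i‖) (𝒰 : Filter I) (nhds ‖u + w‖) := by
        have := hπ (Y + H)
        rwa [map_add, hYu, ← hw] at this
      have tminus : Tendsto (fun i => ‖(Y - H) i‖) (𝒰 : Filter I) (nhds ‖u - w‖) := by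
        have := hπ (Y - H)
        rwa [map_sub, hYu, ← hw] at this
      have tsum : Tendsto (fun i => ‖(Y + H) i‖ + ‖(Y - H) i‖) (𝒰 : Filter I)
          (nhds (‖u + w‖ + ‖u - w‖)) := tplus.add tminus
      apply ge_of_tendsto tsum
      filter_upwards [hA] with i hi
      have : (Y + H) i = y i + h i := by rw [lp.coeFn_add]; rfl
      have h2 : (Y - H) i = y i - h i := by rw [lp.coeFn_sub]; rfl
      rw [this, h2]
      exact (hh2 i hi).2
    refine ⟨w, hrsub ⟨?_, hwne⟩, ?_⟩
    · rw [mem_ball_zero_iff, hwnorm]; exact htr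
    · show δ - ε ≤ (‖u + w‖ + ‖u - w‖ - 2) / ‖w‖
      rw [hwnorm, le_div_iff₀ ht0]
      linarith
  -- conclude
  have : ∀ ε : ℝ, 0 < ε → δ ≤ roughness u + ε := by
    intro ε hε
    have := key ε hε
    linarith
  exact le_of_forall_pos_le_add this
end

section
/- For every f ∈ L¹[0,1] with ‖f‖₁ = 1, there exists g ∈ L¹[0,1] with ‖g‖₁ = 1 such that ‖f + g‖₁ = 1 and ‖f − g‖₁ = 1. -/
/-!
Split `f` at a point `t` of `[0,1]` carrying half of its mass: `∫_{[0,t]} |f| = ∫_{(t,1]} |f| = 1/2`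
(intermediate value theorem for the continuous function `t ↦ ∫_{[0,t]} |f|`). If `u`, `v` are the
restrictions of `f` to the two pieces, disjointness of supports gives `‖u ± v‖ = ‖u‖ + ‖v‖ = 1`,
so `g = u - v` works: `f + g = 2u` and `f - g = 2v` both have norm `2 · 1/2 = 1`.
-/

open MeasureTheory Set

theorem exists_norm_eq_norm_add_eq_norm_sub_of_split {E : Type*} [SeminormedAddCommGroup E]
    [NormedSpace ℝ E] {u v : E} (hadd : ‖u + v‖ = ‖u‖ + ‖v‖) (hsub : ‖u - v‖ = ‖u‖ + ‖v‖)
    (huv : ‖u‖ = ‖v‖) :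
    ∃ g : E, ‖g‖ = ‖u + v‖ ∧ ‖u + v + g‖ = ‖u + v‖ ∧ ‖u + v - g‖ = ‖u + v‖ := by
  refine ⟨u - v, hsub.trans hadd.symm, ?_, ?_⟩
  · calc ‖u + v + (u - v)‖ = ‖(2 : ℝ) • u‖ := by rw [two_smul]; abel_nf
      _ = ‖u + v‖ := by rw [norm_smul, hadd, huv]; norm_num; ring
  · calc ‖u + v - (u - v)‖ = ‖(2 : ℝ) • v‖ := by rw [two_smul]; abel_nf
      _ = ‖u + v‖ := by rw [norm_smul, hadd, huv]; norm_num; ring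

namespace MeasureTheory.L1

variable {α E : Type*} [MeasurableSpace α] [NormedAddCommGroup E] [NormedSpace ℝ E]
  {μ : Measure α}

theorem exists_norm_eq_norm_add_eq_norm_sub (f : α →₁[μ] E) {s : Set α} (hs : MeasurableSet s)
    (hf : ∫ x in s, ‖f x‖ ∂μ = ∫ x in sᶜ, ‖f x‖ ∂μ) :
    ∃ g : α →₁[μ] E, ‖g‖ = ‖f‖ ∧ ‖f + g‖ = ‖f‖ ∧ ‖f - g‖ = ‖f‖ := by
  have hfi := L1.integrable_coeFn f
  set u := (hfi.indicator hs).toL1 _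
  set v := (hfi.indicator hs.compl).toL1 _
  have norm_piece : ∀ t, MeasurableSet t → (h : Integrable (t.indicator f) μ) →
      ‖h.toL1 _‖ = ∫ x in t, ‖f x‖ ∂μ := fun t ht h => by
    simp only [L1.norm_of_fun_eq_integral_norm, norm_indicator_eq_indicator_norm,
      integral_indicator ht]
  have norm_sum : ‖u‖ + ‖v‖ = ‖f‖ := by
    rw [norm_piece s hs, norm_piece sᶜ hs.compl, integral_add_compl hs hfi.norm,
      L1.norm_eq_integral_norm]
  have hsum : u + v = f := by
    simp only [u, v, ← Integrable.toL1_add, indicator_self_add_compl, Integrable.toL1_coeFn]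
  have hdiff : ‖u - v‖ = ‖f‖ := by
    rw [← Integrable.toL1_sub, L1.norm_of_fun_eq_integral_norm, L1.norm_eq_integral_norm]
    refine integral_congr_ae (ae_of_all _ fun x => ?_)
    by_cases hx : x ∈ s <;> simp [hx]
  rw [← hsum]
  exact exists_norm_eq_norm_add_eq_norm_sub_of_split (hsum ▸ norm_sum.symm)
    (hdiff.trans norm_sum.symm) (by rwa [norm_piece s hs, norm_piece sᶜ hs.compl])

end MeasureTheory.L1

theorem MeasureTheory.Integrable.exists_setIntegral_Iic_eq_setIntegral_Ioi {μ : Measure ℝ}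
    [NullSingletonClass μ] {f : ℝ → ℝ} (hf : Integrable f μ) {a b : ℝ} (ha : μ (Iic a) = 0)
    (hb : μ (Ioi b) = 0) : ∃ t, ∫ x in Iic t, f x ∂μ = ∫ x in Ioi t, f x ∂μ := by
  set F : ℝ → ℝ := fun t => ∫ x in Iic t, f x ∂μ
  have hF : Continuous F := by
    have hF_eq : F = fun t => F 0 + ∫ x in (0:ℝ)..t, f x ∂μ := by
      ext t
      rw [← intervalIntegral.integral_Iic_sub_Iic hf.integrableOn hf.integrableOn]
      ring
    rw [hF_eq]
    exact continuous_const.add (hf.continuous_primitive 0)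
  have hFa : F a = 0 := setIntegral_measure_zero _ ha
  have hFb : F b = ∫ x, f x ∂μ := by
    rw [← intervalIntegral.integral_Iic_add_Ioi hf.integrableOn hf.integrableOn,
      setIntegral_measure_zero _ hb, add_zero]
  obtain ⟨t, -, ht⟩ : (∫ x, f x ∂μ) / 2 ∈ F '' uIcc a b := by
    refine intermediate_value_uIcc hF.continuousOn ?_
    rw [hFa, hFb, mem_uIcc]
    rcases le_total 0 (∫ x, f x ∂μ) with h | h
    · exact Or.inl ⟨by linarith, by linarith⟩
    · exact Or.inr ⟨by linarith, by linarith⟩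
  refine ⟨t, ?_⟩
  have hsplit := intervalIntegral.integral_Iic_add_Ioi (b := t) hf.integrableOn hf.integrableOn
  simp only [F] at ht
  linarith

theorem stmt13
    (f : Lp ℝ 1 (volume.restrict (Set.Icc (0:ℝ) 1))) (hf : ‖f‖ = 1) :
    ∃ g : Lp ℝ 1 (volume.restrict (Set.Icc (0:ℝ) 1)),
      ‖g‖ = 1 ∧ ‖f + g‖ = 1 ∧ ‖f - g‖ = 1 := by
  have null_Iic : volume.restrict (Icc (0:ℝ) 1) (Iic 0) = 0 := by
    rw [Measure.restrict_apply measurableSet_Iic]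
    exact measure_mono_null (fun x hx => le_antisymm hx.1 hx.2.1) Real.volume_singleton
  have null_Ioi : volume.restrict (Icc (0:ℝ) 1) (Ioi 1) = 0 := by
    rw [Measure.restrict_apply measurableSet_Ioi]
    exact measure_mono_null (fun x hx => absurd hx.2.2 (not_le.2 hx.1)) measure_empty
  obtain ⟨t, ht⟩ :=
    (L1.integrable_coeFn f).norm.exists_setIntegral_Iic_eq_setIntegral_Ioi null_Iic null_Ioi
  rw [← compl_Iic] at ht
  simpa only [hf] using L1.exists_norm_eq_norm_add_eq_norm_sub f measurableSet_Iic ht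
end

section
/- Every nonempty weak*-slice of the closed unit ball of ℓ∞ has diameter 2; consequently the unit ball of ℓ∞ (as the dual of ℓ¹) has no weak*-strongly exposed points. -/
set_option synthInstance.maxHeartbeats 400000

open Filter Metric

section
variable (a : lp (fun _ : ℕ => ℝ) 1)

noncomputable def sgnSeq : ℕ → ℝ := fun n => if a n < 0 then -1 else 1

lemma abs_sgnSeq (n : ℕ) : |sgnSeq a n| = 1 := by
  unfold sgnSeq; split <;> simp

lemma memℓp_sgnSeq : Memℓp (sgnSeq a) ⊤ := by
  apply memℓp_infty
  refine ⟨1, ?_⟩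
  rintro x ⟨n, rfl⟩
  simp [Real.norm_eq_abs, abs_sgnSeq]

noncomputable def sgnLp : lp (fun _ : ℕ => ℝ) ⊤ := ⟨sgnSeq a, memℓp_sgnSeq a⟩

lemma sgnLp_apply (n : ℕ) : sgnLp a n = sgnSeq a n := rfl

lemma norm_sgnLp_le : ‖sgnLp a‖ ≤ 1 := by
  apply lp.norm_le_of_forall_le zero_le_one
  intro n
  simp [sgnLp_apply, Real.norm_eq_abs, abs_sgnSeq]

lemma mul_sgnSeq (n : ℕ) : a n * sgnSeq a n = |a n| := by
  unfold sgnSeq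
  rcases lt_or_ge (a n) 0 with h | h
  · rw [if_pos h, abs_of_neg h]; ring
  · rw [if_neg (not_lt.2 h), abs_of_nonneg h]; ring

lemma summable_abs_a : Summable (fun n => |a n|) := by
  have := (lp.memℓp a).summable (p := 1) (by norm_num)
  simpa [Real.norm_eq_abs] using this

lemma norm_a_eq : ‖a‖ = ∑' n, |a n| := by
  rw [lp.norm_eq_tsum_rpow (by norm_num)]
  simp [Real.norm_eq_abs]

lemma tsum_sgn (ha : ‖a‖ = 1) : (∑' n, a n * sgnLp a n) = 1 := by
  have : (fun n => a n * sgnLp a n) = fun n => |a n| := by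
    funext n; rw [sgnLp_apply, mul_sgnSeq]
  rw [this, ← norm_a_eq, ha]

noncomputable def flipSeq (m : ℕ) : ℕ → ℝ := fun n => if n = m then -sgnSeq a n else sgnSeq a n

lemma abs_flipSeq (m n : ℕ) : |flipSeq a m n| = 1 := by
  unfold flipSeq; split <;> simp [abs_sgnSeq]

lemma memℓp_flipSeq (m : ℕ) : Memℓp (flipSeq a m) ⊤ := by
  apply memℓp_infty
  refine ⟨1, ?_⟩
  rintro x ⟨n, rfl⟩
  simp [Real.norm_eq_abs, abs_flipSeq]

noncomputable def flipLp (m : ℕ) : lp (fun _ : ℕ => ℝ) ⊤ := ⟨flipSeq a m, memℓp_flipSeq a m⟩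

lemma flipLp_apply (m n : ℕ) : flipLp a m n = flipSeq a m n := rfl

lemma norm_flipLp_le (m : ℕ) : ‖flipLp a m‖ ≤ 1 := by
  apply lp.norm_le_of_forall_le zero_le_one
  intro n
  simp [flipLp_apply, Real.norm_eq_abs, abs_flipSeq]

lemma tsum_flip (ha : ‖a‖ = 1) (m : ℕ) :
    (∑' n, a n * flipLp a m n) = 1 - 2 * |a m| := by
  have key : (fun n => a n * flipLp a m n)
      = fun n => |a n| - (if n = m then 2 * |a m| else 0) := by
    funext n
    rw [flipLp_apply]
    unfold flipSeq
    by_cases h : n = m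
    · subst h
      rw [if_pos rfl, if_pos rfl, ← mul_sgnSeq]
      ring
    · rw [if_neg h, if_neg h, mul_sgnSeq]
      ring
  rw [key, Summable.tsum_sub (summable_abs_a a) ⟨_, hasSum_ite_eq m (2 * |a m|)⟩,
    ← norm_a_eq, ha, tsum_ite_eq]

lemma two_le_norm_sub (m : ℕ) : 2 ≤ ‖sgnLp a - flipLp a m‖ := by
  have h := lp.norm_apply_le_norm (E := fun _ : ℕ => ℝ) ENNReal.top_ne_zero
    (sgnLp a - flipLp a m) m
  have : (sgnLp a - flipLp a m) m = 2 * sgnSeq a m := by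
    rw [lp.coeFn_sub, Pi.sub_apply, sgnLp_apply, flipLp_apply]
    unfold flipSeq
    rw [if_pos rfl]; ring
  rw [this, Real.norm_eq_abs, abs_mul, abs_sgnSeq] at h
  simpa using h

end

/-- Every nonempty weak*-slice of the unit ball of `ℓ∞` (as the dual of `ℓ¹`,
via the pairing `(a, x) ↦ ∑' n, a n * x n`) has diameter `2`; consequently the unit
ball of `ℓ∞` has no weak*-strongly exposed points. -/
theorem stmt19 :
    (∀ a : lp (fun _ : ℕ => ℝ) 1, ‖a‖ = 1 → ∀ α : ℝ, 0 < α → α < 1 →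
      Metric.diam {x : lp (fun _ : ℕ => ℝ) ⊤ | ‖x‖ ≤ 1 ∧ (∑' n, a n * x n) > 1 - α} = 2) ∧
    (∀ x : lp (fun _ : ℕ => ℝ) ⊤, ‖x‖ ≤ 1 →
      ∀ a : lp (fun _ : ℕ => ℝ) 1, ‖a‖ = 1 → (∑' n, a n * x n) = 1 →
        ¬ (∀ y : ℕ → lp (fun _ : ℕ => ℝ) ⊤, (∀ k, ‖y k‖ ≤ 1) →
            Tendsto (fun k => ∑' n, a n * (y k) n) atTop (nhds 1) →
            Tendsto (fun k => ‖y k - x‖) atTop (nhds 0))) := by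
  constructor
  · intro a ha α hα hα1
    obtain ⟨m, hm⟩ : ∃ m, |a m| < α / 2 :=
      (((summable_abs_a a).tendsto_atTop_zero).eventually_lt_const (by positivity)).exists
    set T := {x : lp (fun _ : ℕ => ℝ) ⊤ | ‖x‖ ≤ 1 ∧ (∑' n, a n * x n) > 1 - α} with hT
    have hS : sgnLp a ∈ T := ⟨norm_sgnLp_le a, by rw [tsum_sgn a ha]; linarith⟩
    have hF : flipLp a m ∈ T := ⟨norm_flipLp_le a m, by rw [tsum_flip a ha]; linarith⟩
    have hbdd : Bornology.IsBounded T := by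
      apply (Metric.isBounded_closedBall (x := (0 : lp (fun _ : ℕ => ℝ) ⊤)) (r := 1)).subset
      intro z hz
      simpa [Metric.mem_closedBall, dist_eq_norm] using hz.1
    refine le_antisymm ?_ ?_
    · apply Metric.diam_le_of_forall_dist_le (by norm_num)
      intro z hz w hw
      rw [dist_eq_norm]
      calc ‖z - w‖ ≤ ‖z‖ + ‖w‖ := norm_sub_le _ _
        _ ≤ 2 := by linarith [hz.1, hw.1]
    · calc (2 : ℝ) ≤ ‖sgnLp a - flipLp a m‖ := two_le_norm_sub a m
        _ = dist (sgnLp a) (flipLp a m) := (dist_eq_norm _ _).symm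
        _ ≤ Metric.diam T := Metric.dist_le_diam_of_mem hbdd hS hF
  · intro x hx a ha hax H
    by_cases h1 : 1 ≤ ‖sgnLp a - x‖
    · have h2 := H (fun _ => sgnLp a) (fun _ => norm_sgnLp_le a)
        (by simpa [tsum_sgn a ha] using (tendsto_const_nhds :
          Tendsto (fun _ : ℕ => (1 : ℝ)) atTop (nhds 1)))
      have := tendsto_nhds_unique h2 tendsto_const_nhds
      linarith
    · push_neg at h1
      have hmex : ∀ k : ℕ, ∃ m, |a m| < 1 / (k + 1) := fun k =>
        (((summable_abs_a a).tendsto_atTop_zero).eventually_lt_const (by positivity)).exists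
      choose m hm using hmex
      have habs : Tendsto (fun k => |a (m k)|) atTop (nhds 0) :=
        squeeze_zero (fun k => abs_nonneg _) (fun k => (hm k).le)
          tendsto_one_div_add_atTop_nhds_zero_nat
      have hval : Tendsto (fun k => ∑' n, a n * (flipLp a (m k)) n) atTop (nhds 1) := by
        have : Tendsto (fun k => 1 - 2 * |a (m k)|) atTop (nhds 1) := by
          have h0 : Tendsto (fun _ : ℕ => (1 : ℝ)) atTop (nhds 1) := tendsto_const_nhds
          simpa using h0.sub (habs.const_mul 2)
        simpa [tsum_flip a ha] using this
      have h2 := H (fun k => flipLp a (m k)) (fun k => norm_flipLp_le a (m k)) hval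
      have hge : ∀ k, (1 : ℝ) ≤ ‖flipLp a (m k) - x‖ := by
        intro k
        have htri : dist (sgnLp a) (flipLp a (m k)) ≤
            dist (sgnLp a) x + dist x (flipLp a (m k)) := dist_triangle _ _ _
        have h2le := two_le_norm_sub a (m k)
        rw [dist_eq_norm, dist_eq_norm, dist_eq_norm] at htri
        have : ‖x - flipLp a (m k)‖ = ‖flipLp a (m k) - x‖ := norm_sub_rev _ _
        linarith [htri, this ▸ htri]
      have := ge_of_tendsto' h2 hge
      linarith
end
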